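/- arXiv:1309.4821 — 5 statements merged into one kernel-verified Lean document; each statement's English description precedes it below -/
import Mathlib

section
/- Let S = (V, C, T, E) be a Monadic Equational System admitting free algebras, and let u, v : C → TA be a parallel pair of Kleisli maps. Then the following are equivalent: (1) every S-algebra (X,s) satisfies u ≡ v; (2) the free S-algebra (T_S A, τ^S_A) on A satisfies u ≡ v; (3) q^S_A ∘ u = q^S_A ∘ v : C → T_S A, where q^S_A : TA → T_S A is the quotient map. -/
open CategoryTheory MonoidalCategory Limits

universe w v₁ v₂ v₃ u₁ u₂ u₃

namespace MonEq

variable (V : Type u₁) [Category.{v₁} V] [MonoidalCategory V]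
variable (C : Type u₂) [Category.{v₂} C]

/-- An action of a monoidal category `V` on a category `C`, with coherence
isomorphisms `lam : I ⊳ c ≅ c` and `assoc : (u ⊗ v) ⊳ c ≅ u ⊳ (v ⊳ c)`. -/
structure MonAction where
  act : V ⥤ C ⥤ C
  lam : act.obj (𝟙_ V) ≅ 𝟭 C
  assoc : ∀ u v : V, act.obj (u ⊗ v) ≅ act.obj v ⋙ act.obj u
  assoc_natural :
    ∀ {u u' v v' : V} (f : u ⟶ u') (g : v ⟶ v') (c : C),
      (act.map (f ⊗ₘ g)).app c ≫ (assoc u' v').hom.app c =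
        (assoc u v).hom.app c ≫ (act.map f).app ((act.obj v).obj c) ≫
          (act.obj u').map ((act.map g).app c)
  triangle_left :
    ∀ (v : V) (c : C),
      (assoc (𝟙_ V) v).hom.app c ≫ lam.hom.app ((act.obj v).obj c) =
        (act.map (λ_ v).hom).app c
  triangle_right :
    ∀ (v : V) (c : C),
      (assoc v (𝟙_ V)).hom.app c ≫ (act.obj v).map (lam.hom.app c) =
        (act.map (ρ_ v).hom).app c
  pentagon :
    ∀ (u v w : V) (c : C),
      (act.map (α_ u v w).hom).app c ≫ (assoc u (v ⊗ w)).hom.app c ≫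
          (act.obj u).map ((assoc v w).hom.app c) =
        (assoc (u ⊗ v) w).hom.app c ≫ (assoc u v).hom.app ((act.obj w).obj c)

variable {V C}

/-- A right-closed structure on a `V`-action: each functor `(-) ⊳ c : V ⥤ C`
has a right adjoint `rhom c = C̲(c,-) : C ⥤ V`. -/
structure RightClosed (A : MonAction V C) where
  rhom : C → C ⥤ V
  adj : ∀ c : C, A.act.flip.obj c ⊣ rhom c

/-- A left-closed structure on a `V`-action: each functor `v ⊳ (-) : C ⥤ C`
has a right adjoint `lhom v = ⟦v,-⟧ : C ⥤ C`. -/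
structure LeftClosed (A : MonAction V C) where
  lhom : V → C ⥤ C
  adj : ∀ v : V, A.act.obj v ⊣ lhom v

variable {A : MonAction V C}

/-- Evaluation (counit) `ev_{a,x} : C̲(a,x) ⊳ a ⟶ x` of the right-closed structure. -/
def RightClosed.ev (R : RightClosed A) (a x : C) :
    (A.act.obj ((R.rhom a).obj x)).obj a ⟶ x :=
  (R.adj a).counit.app x

/-- Evaluation (counit) `ev_{v,x} : v ⊳ ⟦v,x⟧ ⟶ x` of the left-closed structure. -/
def LeftClosed.ev (L : LeftClosed A) (v : V) (x : C) :
    (A.act.obj v).obj ((L.lhom v).obj x) ⟶ x :=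
  (L.adj v).counit.app x

/-- Contravariant functorial action `C̲(f,x) : C̲(b,x) ⟶ C̲(a,x)` of the right-homs. -/
def RightClosed.rmap (R : RightClosed A) {a b : C} (f : a ⟶ b) (x : C) :
    (R.rhom b).obj x ⟶ (R.rhom a).obj x :=
  ((R.adj a).homEquiv _ x) ((A.act.obj ((R.rhom b).obj x)).map f ≫ R.ev b x)

/-- Contravariant functorial action `⟦h,x⟧ : ⟦w,x⟧ ⟶ ⟦v,x⟧` of the left-homs. -/
def LeftClosed.lmap (L : LeftClosed A) {v w : V} (h : v ⟶ w) (x : C) :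
    (L.lhom w).obj x ⟶ (L.lhom v).obj x :=
  ((L.adj v).homEquiv _ x) ((A.act.map h).app ((L.lhom w).obj x) ≫ L.ev w x)

variable (A) in
/-- A strong endofunctor on a `V`-action. -/
structure StrongEndo where
  F : C ⥤ C
  str : ∀ v : V, F ⋙ A.act.obj v ⟶ A.act.obj v ⋙ F
  str_natural :
    ∀ {v w : V} (h : v ⟶ w) (c : C),
      (A.act.map h).app (F.obj c) ≫ (str w).app c =
        (str v).app c ≫ F.map ((A.act.map h).app c)
  str_lam :
    ∀ c : C,
      (str (𝟙_ V)).app c ≫ F.map (A.lam.hom.app c) = A.lam.hom.app (F.obj c)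
  str_assoc :
    ∀ (u v : V) (c : C),
      (str (u ⊗ v)).app c ≫ F.map ((A.assoc u v).hom.app c) =
        (A.assoc u v).hom.app (F.obj c) ≫ (A.act.obj u).map ((str v).app c) ≫
          (str u).app ((A.act.obj v).obj c)

/-- Strong natural transformations between strong endofunctors. -/
def IsStrongHom (F G : StrongEndo A) (τ : F.F ⟶ G.F) : Prop :=
  ∀ (v : V) (c : C),
    (A.act.obj v).map (τ.app c) ≫ (G.str v).app c =
      (F.str v).app c ≫ τ.app ((A.act.obj v).obj c)

variable (A) in
/-- A strong monad on a `V`-action: a strong endofunctor with a compatible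
monad structure. -/
structure StrongMonad extends StrongEndo A where
  unit : 𝟭 C ⟶ F
  mul : F ⋙ F ⟶ F
  left_unit : ∀ c : C, unit.app (F.obj c) ≫ mul.app c = 𝟙 (F.obj c)
  right_unit : ∀ c : C, F.map (unit.app c) ≫ mul.app c = 𝟙 (F.obj c)
  mul_assoc' : ∀ c : C, F.map (mul.app c) ≫ mul.app c = mul.app (F.obj c) ≫ mul.app c
  unit_str :
    ∀ (v : V) (c : C),
      (A.act.obj v).map (unit.app c) ≫ (str v).app c = unit.app ((A.act.obj v).obj c)
  mul_str :
    ∀ (v : V) (c : C),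
      (str v).app (F.obj c) ≫ F.map ((str v).app c) ≫ mul.app ((A.act.obj v).obj c) =
        (A.act.obj v).map (mul.app c) ≫ (str v).app c

/-- The interpretation map `ι(s)_a : C̲(a,X) ⊳ T a ⟶ X` determined by a strength `σ`
and a `T`-algebra `s : T X ⟶ X`. -/
def interpMap (R : RightClosed A) (T : C ⥤ C)
    (σ : ∀ v : V, T ⋙ A.act.obj v ⟶ A.act.obj v ⋙ T)
    {X : C} (s : T.obj X ⟶ X) (a : C) :
    (A.act.obj ((R.rhom a).obj X)).obj (T.obj a) ⟶ X :=
  (σ ((R.rhom a).obj X)).app a ≫ T.map (R.ev a X) ≫ s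

/-- The interpretation `⟦t⟧_{(X,s)} : C̲(a,X) ⊳ c ⟶ X` of a Kleisli map `t : c ⟶ T a`. -/
def interp (R : RightClosed A) (T : C ⥤ C)
    (σ : ∀ v : V, T ⋙ A.act.obj v ⟶ A.act.obj v ⋙ T)
    {X : C} (s : T.obj X ⟶ X) {c a : C} (t : c ⟶ T.obj a) :
    (A.act.obj ((R.rhom a).obj X)).obj c ⟶ X :=
  (A.act.obj ((R.rhom a).obj X)).map t ≫ interpMap R T σ s a

/-- Satisfaction of an equation `u ≡ v : c ⟶ T a` by an algebra `(X,s)`. -/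
def Satisfies (R : RightClosed A) (T : C ⥤ C)
    (σ : ∀ v : V, T ⋙ A.act.obj v ⟶ A.act.obj v ⋙ T)
    {X : C} (s : T.obj X ⟶ X) {c a : C} (u v : c ⟶ T.obj a) : Prop :=
  interp R T σ s u = interp R T σ s v

/-- A `T`-equation: a parallel pair of Kleisli maps. -/
structure TEq (T : C ⥤ C) where
  coar : C
  ar : C
  lhs : coar ⟶ T.obj ar
  rhs : coar ⟶ T.obj ar

variable (A) in
/-- A Monadic Equational System: a biclosed `V`-action together with a strong
monad and a set of equations. -/
structure MES where
  R : RightClosed A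
  L : LeftClosed A
  T : StrongMonad A
  E : Set (TEq T.F)

/-- Eilenberg–Moore algebra laws for a strong monad. -/
def IsEMAlgebra (M : StrongMonad A) {X : C} (s : M.F.obj X ⟶ X) : Prop :=
  M.unit.app X ≫ s = 𝟙 X ∧ M.mul.app X ≫ s = M.F.map s ≫ s

/-- An `S`-algebra: an Eilenberg–Moore algebra satisfying all the equations. -/
def IsSAlgebra (S : MES A) {X : C} (s : S.T.F.obj X ⟶ X) : Prop :=
  IsEMAlgebra S.T s ∧ ∀ e ∈ S.E, Satisfies S.R S.T.F S.T.str s e.lhs e.rhs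

/-- Free `S`-algebras: a left adjoint (described by its universal property)
to the forgetful functor from `S`-algebras. -/
structure FreeAlgebras (S : MES A) where
  TS : C → C
  τ : ∀ X : C, S.T.F.obj (TS X) ⟶ TS X
  unit : ∀ X : C, X ⟶ TS X
  isAlg : ∀ X : C, IsSAlgebra S (τ X)
  extend : ∀ (X : C) {Y : C} (t : S.T.F.obj Y ⟶ Y), IsSAlgebra S t →
    ∀ f : X ⟶ Y, ∃! g : TS X ⟶ Y, S.T.F.map g ≫ t = τ X ≫ g ∧ unit X ≫ g = f

/-- The lifted algebra `s_v : T ⟦v,X⟧ ⟶ ⟦v,X⟧` on a left-hom. -/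
def liftAlg (L : LeftClosed A) (T : C ⥤ C)
    (σ : ∀ v : V, T ⋙ A.act.obj v ⟶ A.act.obj v ⋙ T)
    {X : C} (s : T.obj X ⟶ X) (v : V) :
    T.obj ((L.lhom v).obj X) ⟶ (L.lhom v).obj X :=
  ((L.adj v).homEquiv _ X)
    ((σ v).app ((L.lhom v).obj X) ≫ T.map (L.ev v X) ≫ s)

/-- The object part `K_X(a) = ⟦C̲(a,X),X⟧` of the double-dualization construction. -/
def Kobj (R : RightClosed A) (L : LeftClosed A) (X a : C) : C :=
  (L.lhom ((R.rhom a).obj X)).obj X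

/-- The morphism part of the double-dualization construction. -/
def Kmap (R : RightClosed A) (L : LeftClosed A) (X : C) {a b : C} (f : a ⟶ b) :
    Kobj R L X a ⟶ Kobj R L X b :=
  L.lmap (R.rmap f X) X

/-- The unit `a ⟶ K_X a` of the double-dualization monad: the transpose of the
evaluation `ev_{a,X}`. -/
def ddUnit (R : RightClosed A) (L : LeftClosed A) (X a : C) : a ⟶ Kobj R L X a :=
  ((L.adj ((R.rhom a).obj X)).homEquiv a X) (R.ev a X)

/-- The map `δ_v : v ⟶ C̲(⟦v,X⟧,X)`: the transpose of the evaluation `ev_{v,X}`. -/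
def dd (R : RightClosed A) (L : LeftClosed A) (X : C) (v : V) :
    v ⟶ (R.rhom ((L.lhom v).obj X)).obj X :=
  ((R.adj ((L.lhom v).obj X)).homEquiv v X) (L.ev v X)

/-- The multiplication `K_X (K_X a) ⟶ K_X a` of the double-dualization monad,
namely `⟦δ_{C̲(a,X)},X⟧`. -/
def ddMult (R : RightClosed A) (L : LeftClosed A) (X a : C) :
    Kobj R L X (Kobj R L X a) ⟶ Kobj R L X a :=
  L.lmap (dd R L X ((R.rhom a).obj X)) X

/-- The map `C̲(v ⊳ a, X) ⊗ v ⟶ C̲(a,X)`, transpose of `ev ∘ assoc`. -/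
def hatg (R : RightClosed A) (X : C) (v : V) (a : C) :
    ((R.rhom ((A.act.obj v).obj a)).obj X) ⊗ v ⟶ (R.rhom a).obj X :=
  ((R.adj a).homEquiv _ X)
    ((A.assoc ((R.rhom ((A.act.obj v).obj a)).obj X) v).hom.app a ≫
      R.ev ((A.act.obj v).obj a) X)

/-- The clone strength `v ⊳ ⟦C̲(a,X),Y⟧ ⟶ ⟦C̲(v ⊳ a,X),Y⟧`. -/
def cloneStr (R : RightClosed A) (L : LeftClosed A) (X Y : C) (v : V) (a : C) :
    (A.act.obj v).obj ((L.lhom ((R.rhom a).obj X)).obj Y) ⟶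
      (L.lhom ((R.rhom ((A.act.obj v).obj a)).obj X)).obj Y :=
  ((L.adj ((R.rhom ((A.act.obj v).obj a)).obj X)).homEquiv _ Y)
    ((A.assoc ((R.rhom ((A.act.obj v).obj a)).obj X) v).inv.app
        ((L.lhom ((R.rhom a).obj X)).obj Y) ≫
      (A.act.map (hatg R X v a)).app ((L.lhom ((R.rhom a).obj X)).obj Y) ≫
      L.ev ((R.rhom a).obj X) Y)

/-- The counit `ε_X : K_X X ⟶ X` of the clone adjunction at `X`. -/
def cleval (R : RightClosed A) (L : LeftClosed A) (X : C) : Kobj R L X X ⟶ X :=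
  L.lmap (((R.adj X).homEquiv (𝟙_ V) X) (A.lam.hom.app X)) X ≫
    A.lam.inv.app ((L.lhom (𝟙_ V)).obj X) ≫ L.ev (𝟙_ V) X

/-- The transpose `m(s)_a : T a ⟶ K_X a` of the interpretation map `ι(s)_a`. -/
def mOf (R : RightClosed A) (L : LeftClosed A) (T : C ⥤ C)
    (σ : ∀ v : V, T ⋙ A.act.obj v ⟶ A.act.obj v ⋙ T)
    {X : C} (s : T.obj X ⟶ X) (a : C) :
    T.obj a ⟶ Kobj R L X a :=
  ((L.adj ((R.rhom a).obj X)).homEquiv (T.obj a) X) (interpMap R T σ s a)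

/-- The identity strength on the identity functor. -/
def idStr (A : MonAction V C) (v : V) : 𝟭 C ⋙ A.act.obj v ⟶ A.act.obj v ⋙ 𝟭 C :=
  { app := fun c => 𝟙 ((A.act.obj v).obj c) }

/-- The unit of the clone monad: the clone transpose of the identity on `X`
(computed through the identity strong functor). -/
def cloneUnit (R : RightClosed A) (L : LeftClosed A) (X a : C) : a ⟶ Kobj R L X a :=
  mOf R L (𝟭 C) (idStr A) (𝟙 X) a

/-- The multiplication of the clone monad: the clone transpose of
`ε_X ∘ K_X ε_X : K_X K_X X ⟶ X` computed through the composite `K_X ∘ K_X`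
with its composite (clone) strength. -/
def cloneMult (R : RightClosed A) (L : LeftClosed A) (X a : C) :
    Kobj R L X (Kobj R L X a) ⟶ Kobj R L X a :=
  ((L.adj ((R.rhom a).obj X)).homEquiv _ X)
    (cloneStr R L X X ((R.rhom a).obj X) (Kobj R L X a) ≫
      Kmap R L X (cloneStr R L X X ((R.rhom a).obj X) a) ≫
      Kmap R L X (Kmap R L X (R.ev a X)) ≫
      Kmap R L X (cleval R L X) ≫ cleval R L X)

end MonEq

/-!
The free algebra is an `S`-algebra, so (1) implies (2). Interpreting a Kleisli map
`t : c ⟶ T a` in an algebra `(X, s)` at the global element of `C̲(a, X)` named by `f : a ⟶ X`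
gives `t ≫ T f ≫ s`; for the free algebra and `f = η^S_a` this is `t ≫ q_a`, whence (2)
implies (3). For (3) implies (1), the left-hom `⟦C̲(a, X), X⟧` of an `S`-algebra `(X, s)`
carries a lifted `S`-algebra structure, and the transpose `m(s)_a : T a ⟶ ⟦C̲(a, X), X⟧` of
the interpretation map is a `T`-algebra morphism out of the free `T`-algebra on `a`. Hence
`m(s)_a` factors through `q_a`, while `⟦t⟧_{(X,s)}` only depends on `t ≫ m(s)_a`.
-/

namespace MonEq

section

variable {V : Type u₁} [Category.{v₁} V] [MonoidalCategory V]
  {C : Type u₂} [Category.{v₂} C] {A : MonAction V C}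

lemma LeftClosed.map_homEquiv_ev (L : LeftClosed A) {v : V} {c x : C}
    (ψ : (A.act.obj v).obj c ⟶ x) :
    (A.act.obj v).map ((L.adj v).homEquiv c x ψ) ≫ L.ev v x = ψ := by
  rw [LeftClosed.ev, ← Adjunction.homEquiv_counit, Equiv.symm_apply_apply]

lemma LeftClosed.hom_ext (L : LeftClosed A) {v : V} {c x : C} {g₁ g₂ : c ⟶ (L.lhom v).obj x}
    (h : (A.act.obj v).map g₁ ≫ L.ev v x = (A.act.obj v).map g₂ ≫ L.ev v x) : g₁ = g₂ :=
  ((L.adj v).homEquiv c x).symm.injective <| by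
    rw [Adjunction.homEquiv_counit, Adjunction.homEquiv_counit]
    exact h

lemma RightClosed.map_homEquiv_ev (R : RightClosed A) {a x : C} {w : V}
    (ψ : (A.act.obj w).obj a ⟶ x) :
    (A.act.map ((R.adj a).homEquiv w x ψ)).app a ≫ R.ev a x = ψ := by
  rw [RightClosed.ev, ← Functor.flip_obj_map, ← Adjunction.homEquiv_counit,
    Equiv.symm_apply_apply]

lemma StrongEndo.str_naturality (F : StrongEndo A) (v : V) {c c' : C} (f : c ⟶ c') :
    (A.act.obj v).map (F.F.map f) ≫ (F.str v).app c' =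
      (F.str v).app c ≫ F.F.map ((A.act.obj v).map f) :=
  (F.str v).naturality f

lemma StrongMonad.mul_naturality (M : StrongMonad A) {c c' : C} (f : c ⟶ c') :
    M.F.map (M.F.map f) ≫ M.mul.app c' = M.mul.app c ≫ M.F.map f :=
  M.mul.naturality f

lemma StrongMonad.eq_map_comp_of_isHom (M : StrongMonad A) {a Y : C} {t : M.F.obj Y ⟶ Y}
    {g : M.F.obj a ⟶ Y} (hg : M.F.map g ≫ t = M.mul.app a ≫ g) :
    g = M.F.map (M.unit.app a ≫ g) ≫ t := by
  rw [Functor.map_comp, Category.assoc, hg, ← Category.assoc, M.right_unit]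
  exact (Category.id_comp g).symm

lemma StrongMonad.hom_ext_of_isHom (M : StrongMonad A) {a Y : C} {t : M.F.obj Y ⟶ Y}
    {g₁ g₂ : M.F.obj a ⟶ Y}
    (h₁ : M.F.map g₁ ≫ t = M.mul.app a ≫ g₁) (h₂ : M.F.map g₂ ≫ t = M.mul.app a ≫ g₂)
    (h : M.unit.app a ≫ g₁ = M.unit.app a ≫ g₂) : g₁ = g₂ := by
  rw [M.eq_map_comp_of_isHom h₁, M.eq_map_comp_of_isHom h₂, h]

def RightClosed.name (R : RightClosed A) {a x : C} (f : a ⟶ x) : 𝟙_ V ⟶ (R.rhom a).obj x :=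
  (R.adj a).homEquiv _ x (A.lam.hom.app a ≫ f)

lemma interp_precomp_name (R : RightClosed A) (F : StrongEndo A) {X : C} (s : F.F.obj X ⟶ X)
    {c a : C} (t : c ⟶ F.F.obj a) (f : a ⟶ X) :
    A.lam.inv.app c ≫ (A.act.map (R.name f)).app c ≫ interp R F.F F.str s t =
      t ≫ F.F.map f ≫ s := by
  unfold interp interpMap
  rw [← reassoc_of% ((A.act.map (R.name f)).naturality t),
    reassoc_of% (F.str_natural (R.name f) a), ← F.F.map_comp_assoc, RightClosed.name,
    R.map_homEquiv_ev]
  simp only [Functor.map_comp, Category.assoc]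
  rw [reassoc_of% (F.str_lam a), reassoc_of% (A.lam.hom.naturality t), Iso.inv_hom_id_app_assoc]

lemma Satisfies.comp_map_comp_eq {R : RightClosed A} {F : StrongEndo A} {X : C}
    {s : F.F.obj X ⟶ X} {c a : C} {u v : c ⟶ F.F.obj a} (h : Satisfies R F.F F.str s u v)
    (f : a ⟶ X) : u ≫ F.F.map f ≫ s = v ≫ F.F.map f ≫ s := by
  rw [← interp_precomp_name R F s u f, ← interp_precomp_name R F s v f]
  exact congrArg _ (congrArg _ h)

/-- `interpMap R M.F M.str s a` is `strongExt M s (R.ev a X)`, and `liftAlg L M.F M.str s v`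
is the transpose of `strongExt M s (L.ev v X)`. -/
def strongExt (M : StrongMonad A) {X : C} (s : M.F.obj X ⟶ X) {w : V} {b : C}
    (f : (A.act.obj w).obj b ⟶ X) : (A.act.obj w).obj (M.F.obj b) ⟶ X :=
  (M.str w).app b ≫ M.F.map f ≫ s

section Lifting

variable (R : RightClosed A) (L : LeftClosed A) (M : StrongMonad A) {X : C} (s : M.F.obj X ⟶ X)

lemma liftAlg_ev (v : V) :
    (A.act.obj v).map (liftAlg L M.F M.str s v) ≫ L.ev v X =
      (M.str v).app ((L.lhom v).obj X) ≫ M.F.map (L.ev v X) ≫ s :=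
  L.map_homEquiv_ev _

lemma mOf_ev (a : C) :
    (A.act.obj ((R.rhom a).obj X)).map (mOf R L M.F M.str s a) ≫ L.ev ((R.rhom a).obj X) X =
      interpMap R M.F M.str s a :=
  L.map_homEquiv_ev _

lemma interp_eq_map_comp_mOf {c a : C} (t : c ⟶ M.F.obj a) :
    interp R M.F M.str s t =
      (A.act.obj ((R.rhom a).obj X)).map (t ≫ mOf R L M.F M.str s a) ≫
        L.ev ((R.rhom a).obj X) X := by
  rw [interp, ← mOf_ev R L]
  exact (Functor.map_comp_assoc _ _ _ _).symm

lemma satisfies_of_comp_mOf_eq {c a : C} {u v : c ⟶ M.F.obj a}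
    (h : u ≫ mOf R L M.F M.str s a = v ≫ mOf R L M.F M.str s a) :
    Satisfies R M.F M.str s u v := by
  rw [Satisfies, interp_eq_map_comp_mOf R L, interp_eq_map_comp_mOf R L, h]

lemma strongExt_comp_mul (hmul : M.mul.app X ≫ s = M.F.map s ≫ s) {w : V} {b : C}
    (f : (A.act.obj w).obj b ⟶ X) :
    (M.str w).app (M.F.obj b) ≫ M.F.map (strongExt M s f) ≫ s =
      (A.act.obj w).map (M.mul.app b) ≫ strongExt M s f := by
  rw [strongExt, ← reassoc_of% (M.mul_str w b), ← reassoc_of% (M.mul_naturality f), hmul]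
  simp only [Functor.map_comp, Category.assoc]

lemma map_homEquiv_comp_liftAlg {v : V} {b : C} {ψ : (A.act.obj v).obj (M.F.obj b) ⟶ X}
    (hψ : (M.str v).app (M.F.obj b) ≫ M.F.map ψ ≫ s = (A.act.obj v).map (M.mul.app b) ≫ ψ) :
    M.F.map ((L.adj v).homEquiv _ X ψ) ≫ liftAlg L M.F M.str s v =
      M.mul.app b ≫ (L.adj v).homEquiv _ X ψ := by
  apply L.hom_ext
  simp only [Functor.map_comp, Category.assoc]
  rw [liftAlg_ev, reassoc_of% (M.str_naturality v ((L.adj v).homEquiv _ X ψ)),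
    ← M.F.map_comp_assoc, L.map_homEquiv_ev, hψ]

lemma IsEMAlgebra.liftAlg (hs : IsEMAlgebra M s) (v : V) :
    IsEMAlgebra M (liftAlg L M.F M.str s v) := by
  constructor
  · apply L.hom_ext
    rw [Functor.map_comp, Category.assoc, liftAlg_ev,
      reassoc_of% (M.unit_str v ((L.lhom v).obj X)),
      ← reassoc_of% (M.unit.naturality (L.ev v X)), hs.1, Category.comp_id]
    simp
  · exact (map_homEquiv_comp_liftAlg L M s (strongExt_comp_mul M s hs.2 (L.ev v X))).symm

lemma mOf_isHom (hmul : M.mul.app X ≫ s = M.F.map s ≫ s) (a : C) :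
    M.F.map (mOf R L M.F M.str s a) ≫ liftAlg L M.F M.str s ((R.rhom a).obj X) =
      M.mul.app a ≫ mOf R L M.F M.str s a :=
  map_homEquiv_comp_liftAlg L M s (strongExt_comp_mul M s hmul (R.ev a X))

def rhomLhomComp (v : V) (a : C) :
    v ⊗ (R.rhom a).obj ((L.lhom v).obj X) ⟶ (R.rhom a).obj X :=
  (R.adj a).homEquiv _ X
    ((A.assoc v ((R.rhom a).obj ((L.lhom v).obj X))).hom.app a ≫
      (A.act.obj v).map (R.ev a ((L.lhom v).obj X)) ≫ L.ev v X)

lemma interpMap_liftAlg (v : V) (a : C) :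
    (A.act.obj v).map (interpMap R M.F M.str (liftAlg L M.F M.str s v) a) ≫ L.ev v X =
      (A.assoc v ((R.rhom a).obj ((L.lhom v).obj X))).inv.app (M.F.obj a) ≫
        (A.act.map (rhomLhomComp R L v a)).app (M.F.obj a) ≫ interpMap R M.F M.str s a := by
  rw [interpMap, interpMap, reassoc_of% (M.str_natural (rhomLhomComp R L v a) a),
    ← M.F.map_comp_assoc, rhomLhomComp, R.map_homEquiv_ev]
  simp only [Functor.map_comp, Category.assoc]
  rw [reassoc_of% (M.str_assoc v _ a), Iso.inv_hom_id_app_assoc,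
    ← reassoc_of% (M.str_naturality v (R.ev a ((L.lhom v).obj X))), liftAlg_ev]

lemma interp_liftAlg (v : V) {c a : C} (t : c ⟶ M.F.obj a) :
    (A.act.obj v).map (interp R M.F M.str (liftAlg L M.F M.str s v) t) ≫ L.ev v X =
      (A.assoc v ((R.rhom a).obj ((L.lhom v).obj X))).inv.app c ≫
        (A.act.map (rhomLhomComp R L v a)).app c ≫ interp R M.F M.str s t := by
  unfold interp
  rw [Functor.map_comp, Category.assoc, interpMap_liftAlg,
    ← reassoc_of% ((A.act.map (rhomLhomComp R L v a)).naturality t),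
    ← reassoc_of% ((A.assoc v ((R.rhom a).obj ((L.lhom v).obj X))).inv.naturality t)]

lemma Satisfies.liftAlg {c a : C} {t₁ t₂ : c ⟶ M.F.obj a} (h : Satisfies R M.F M.str s t₁ t₂)
    (v : V) : Satisfies R M.F M.str (liftAlg L M.F M.str s v) t₁ t₂ :=
  L.hom_ext (by rw [interp_liftAlg, interp_liftAlg, h])

end Lifting

lemma IsSAlgebra.liftAlg {S : MES A} {X : C} {s : S.T.F.obj X ⟶ X} (hs : IsSAlgebra S s)
    (v : V) : IsSAlgebra S (liftAlg S.L S.T.F S.T.str s v) :=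
  ⟨hs.1.liftAlg S.L S.T s v, fun e he => (hs.2 e he).liftAlg S.R S.L S.T s v⟩

lemma FreeAlgebras.exists_comp_eq_mOf {S : MES A} (FA : FreeAlgebras S)
    {q : ∀ X : C, S.T.F.obj X ⟶ FA.TS X} {a : C}
    (hq_hom : S.T.F.map (q a) ≫ FA.τ a = S.T.mul.app a ≫ q a)
    (hq_unit : S.T.unit.app a ≫ q a = FA.unit a) {X : C} {s : S.T.F.obj X ⟶ X}
    (hs : IsSAlgebra S s) :
    -- `Kobj` is not reducible: with codomain `Kobj S.R S.L X a`, composites with `g` resist `rw`.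
    ∃ g : FA.TS a ⟶ (S.L.lhom ((S.R.rhom a).obj X)).obj X,
      q a ≫ g = mOf S.R S.L S.T.F S.T.str s a := by
  obtain ⟨g, ⟨hg_hom, hg_unit⟩, -⟩ := FA.extend a _ (hs.liftAlg ((S.R.rhom a).obj X))
    (S.T.unit.app a ≫ mOf S.R S.L S.T.F S.T.str s a)
  refine ⟨g, S.T.hom_ext_of_isHom ?_ (mOf_isHom S.R S.L S.T s hs.1.2 a) ?_⟩
  · rw [Functor.map_comp, Category.assoc, hg_hom, reassoc_of% hq_hom]
  · rw [reassoc_of% hq_unit, hg_unit]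


end

/-- **Internal strong completeness** (Theorem 7.? of the paper).
For a MES `S` admitting free algebras, with `q a : T a ⟶ T_S a` the quotient map
(the unique homomorphic extension `(T a, μ_a) ⟶ (T_S a, τ_a)` of `η^S_a`),
the following are equivalent for a parallel pair `u, v : c ⟶ T a` of Kleisli maps:
(1) every `S`-algebra satisfies `u ≡ v`;
(2) the free `S`-algebra `(T_S a, τ_a)` on `a` satisfies `u ≡ v`;
(3) `u ≫ q a = v ≫ q a`. -/
theorem internal_strong_completeness
    {V : Type u₁} [Category.{v₁} V] [MonoidalCategory V]
    {C : Type u₂} [Category.{v₂} C]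
    {A : MonAction V C} (S : MES A) (FA : FreeAlgebras S)
    (q : ∀ X : C, S.T.F.obj X ⟶ FA.TS X)
    (hq_hom : ∀ X : C, S.T.F.map (q X) ≫ FA.τ X = S.T.mul.app X ≫ q X)
    (hq_unit : ∀ X : C, S.T.unit.app X ≫ q X = FA.unit X)
    {c a : C} (u v : c ⟶ S.T.F.obj a) :
    ((∀ (X : C) (s : S.T.F.obj X ⟶ X), IsSAlgebra S s →
        Satisfies S.R S.T.F S.T.str s u v) ↔
      Satisfies S.R S.T.F S.T.str (FA.τ a) u v) ∧
    (Satisfies S.R S.T.F S.T.str (FA.τ a) u v ↔ u ≫ q a = v ≫ q a) := by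
  have h12 : (∀ (X : C) (s : S.T.F.obj X ⟶ X), IsSAlgebra S s →
      Satisfies S.R S.T.F S.T.str s u v) → Satisfies S.R S.T.F S.T.str (FA.τ a) u v :=
    fun h => h _ (FA.τ a) (FA.isAlg a)
  have h23 (h : Satisfies S.R S.T.F S.T.str (FA.τ a) u v) : u ≫ q a = v ≫ q a := by
    have hq : q a = S.T.F.map (FA.unit a) ≫ FA.τ a := by
      rw [← hq_unit]
      exact S.T.eq_map_comp_of_isHom (hq_hom a)
    rw [hq]
    exact h.comp_map_comp_eq (FA.unit a)
  have h31 (h : u ≫ q a = v ≫ q a) (X : C) (s : S.T.F.obj X ⟶ X) (hs : IsSAlgebra S s) :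
      Satisfies S.R S.T.F S.T.str s u v := by
    obtain ⟨g, hg⟩ := FA.exists_comp_eq_mOf (hq_hom a) (hq_unit a) hs
    apply satisfies_of_comp_mOf_eq S.R S.L S.T s
    have hmOf := congrArg (· ≫ g) h
    simp only [Category.assoc, hg] at hmOf
    exact hmOf
  exact ⟨⟨h12, fun h => h31 (h23 h)⟩, ⟨h23, fun h => h12 (h31 h)⟩⟩

end MonEq
end

section
/- Let S = (V, C, T, E) be a Monadic Equational System. If the equational judgement u ≡ v : C → TA is derivable from E in Equational Metalogic, then every S-algebra (X,s) satisfies u ≡ v. In particular, each individual rule is sound: Ref, Sym, Trans, Axiom, Comp (if u₁ ≡ v₁ : C → TB and u₂ ≡ v₂ : B → TA are satisfied then the Kleisli composites satisfy u₁{u₂} ≡ v₁{v₂} : C → TA, where w₁{w₂} = μ_A ∘ T(w₂) ∘ w₁), Ext (if u ≡ v : C → TA is satisfied then V ⊳ u ≡ V ⊳ v : V ⊳ C → T(V ⊳ A) is satisfied, where V ⊳ w denotes φ_{V,A} ∘ (V ⊳ w)), and Local (if u ∘ e_i ≡ v ∘ e_i is satisfied for a jointly epimorphic family {e_i : C_i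 → C}, then u ≡ v is satisfied). -/
open CategoryTheory MonoidalCategory Limits

universe w v₁ v₂ v₃ u₁ u₂ u₃

namespace MonEq

variable {V : Type u₁} [Category.{v₁} V] [MonoidalCategory V]
variable {C : Type u₂} [Category.{v₂} C]
variable {A : MonAction V C}

/-- A family of maps is jointly epimorphic. -/
def JointlyEpi {ι : Type w} {c : C} (D : ι → C) (e : ∀ i, D i ⟶ c) : Prop :=
  ∀ {Z : C} (f g : c ⟶ Z), (∀ i, e i ≫ f = e i ≫ g) → f = g

/-- **Equational Metalogic**: the deductive system over Kleisli-map equations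
generated by reflexivity, symmetry, transitivity, axioms, congruence of
(Kleisli) composition, congruence of the monoidal action, and local character. -/
inductive EML (S : MES A) : ∀ {c a : C}, (c ⟶ S.T.F.obj a) → (c ⟶ S.T.F.obj a) → Prop
  | ax {e : TEq S.T.F} (he : e ∈ S.E) : EML S e.lhs e.rhs
  | refl {c a : C} (u : c ⟶ S.T.F.obj a) : EML S u u
  | symm {c a : C} {u v : c ⟶ S.T.F.obj a} : EML S u v → EML S v u
  | trans {c a : C} {u v w : c ⟶ S.T.F.obj a} : EML S u v → EML S v w → EML S u w
  | comp {c b a : C} {u₁ v₁ : c ⟶ S.T.F.obj b} {u₂ v₂ : b ⟶ S.T.F.obj a} :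
      EML S u₁ v₁ → EML S u₂ v₂ →
      EML S (u₁ ≫ S.T.F.map u₂ ≫ S.T.mul.app a) (v₁ ≫ S.T.F.map v₂ ≫ S.T.mul.app a)
  | ext {c a : C} (v : V) {u w : c ⟶ S.T.F.obj a} : EML S u w →
      EML S ((A.act.obj v).map u ≫ (S.T.str v).app a)
            ((A.act.obj v).map w ≫ (S.T.str v).app a)
  | local_ {c a : C} {u v : c ⟶ S.T.F.obj a} {ι : Type w} (D : ι → C)
      (e : ∀ i, D i ⟶ c) (he : JointlyEpi D e)
      (h : ∀ i, EML S (e i ≫ u) (e i ≫ v)) : EML S u v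

/-!
An algebra `(X, s)` satisfies `u ≡ v : c ⟶ T a` when the interpretations
`C̲(a,X) ⊳ c ⟶ X` agree, so each rule of the metalogic amounts to an identity between
interpretations. For `Local`, transposing along the left-closed structure turns `⟦t⟧` into
`t ≫ m(s)_a`, and joint epimorphicity applies directly. For `Comp`, the interpretation of a
Kleisli composite `w₁{w₂}` is `⟦w₁⟧` precomposed with `ĥ ⊳ c`, where `ĥ : C̲(a,X) ⟶ C̲(b,X)`
is the right transpose of `⟦w₂⟧`; this uses the multiplication law of the algebra and the
compatibility of `μ` with the strength. For `Ext`, up to the associator, `⟦v ⊳ u⟧` is `⟦u⟧`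
precomposed with `ĝ ⊳ c`, where `ĝ = hatg : C̲(v ⊳ a, X) ⊗ v ⟶ C̲(a,X)`; this uses only the
strength axioms.
-/

lemma RightClosed.act_map_homEquiv_ev (R : RightClosed A) {a x : C} {W : V}
    (g : (A.act.obj W).obj a ⟶ x) :
    (A.act.map ((R.adj a).homEquiv W x g)).app a ≫ R.ev a x = g := by
  have h := ((R.adj a).homEquiv W x).symm_apply_apply g
  rwa [Adjunction.homEquiv_counit] at h

section Interp

variable (R : RightClosed A) (T : C ⥤ C) (σ : ∀ v : V, T ⋙ A.act.obj v ⟶ A.act.obj v ⋙ T)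
  {X : C} (s : T.obj X ⟶ X)

lemma interp_comp {c' c a : C} (f : c' ⟶ c) (t : c ⟶ T.obj a) :
    interp R T σ s (f ≫ t) = (A.act.obj ((R.rhom a).obj X)).map f ≫ interp R T σ s t := by
  simp [interp]

lemma homEquiv_interp (L : LeftClosed A) {c a : C} (t : c ⟶ T.obj a) :
    (L.adj ((R.rhom a).obj X)).homEquiv c X (interp R T σ s t) = t ≫ mOf R L T σ s a :=
  (L.adj _).homEquiv_naturality_left t _

lemma satisfies_iff_comp_mOf (L : LeftClosed A) {c a : C} (u v : c ⟶ T.obj a) :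
    Satisfies R T σ s u v ↔ u ≫ mOf R L T σ s a = v ≫ mOf R L T σ s a := by
  rw [← homEquiv_interp, ← homEquiv_interp]
  exact ((L.adj _).homEquiv c X).apply_eq_iff_eq.symm

theorem Satisfies.of_jointlyEpi (L : LeftClosed A) {c a : C} {u v : c ⟶ T.obj a}
    {ι : Type w} {D : ι → C} {e : ∀ i, D i ⟶ c} (he : JointlyEpi D e)
    (h : ∀ i, Satisfies R T σ s (e i ≫ u) (e i ≫ v)) :
    Satisfies R T σ s u v := by
  simp only [satisfies_iff_comp_mOf R T σ s L, Category.assoc] at h ⊢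
  exact he _ _ h

end Interp

section Comp

variable (R : RightClosed A) (M : StrongMonad A) {X : C} (s : M.F.obj X ⟶ X)

lemma interpMap_map_comp_mul (hs : M.mul.app X ≫ s = M.F.map s ≫ s) {b a : C}
    (w : b ⟶ M.F.obj a) :
    (A.act.obj ((R.rhom a).obj X)).map (M.F.map w ≫ M.mul.app a) ≫ interpMap R M.F M.str s a =
      (A.act.map ((R.adj b).homEquiv _ X (interp R M.F M.str s w))).app (M.F.obj b) ≫
        interpMap R M.F M.str s b := by
  set W := (R.rhom a).obj X
  set h := (R.adj b).homEquiv W X (interp R M.F M.str s w)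
  have hev : M.F.map ((A.act.map h).app b ≫ R.ev b X) ≫ s =
      M.F.map (interp R M.F M.str s w) ≫ s := by
    rw [R.act_map_homEquiv_ev]
  simp only [interp, interpMap, Functor.map_comp, Category.assoc] at hev ⊢
  rw [← reassoc_of% (M.mul_str W a), ← reassoc_of% (M.mul.naturality (R.ev a X)), hs,
    reassoc_of% ((M.str W).naturality w), reassoc_of% (M.str_natural h b), hev]

lemma interp_kleisli (hs : M.mul.app X ≫ s = M.F.map s ≫ s) {c b a : C}
    (w₁ : c ⟶ M.F.obj b) (w₂ : b ⟶ M.F.obj a) :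
    interp R M.F M.str s (w₁ ≫ M.F.map w₂ ≫ M.mul.app a) =
      (A.act.map ((R.adj b).homEquiv _ X (interp R M.F M.str s w₂))).app c ≫
        interp R M.F M.str s w₁ := by
  rw [interp_comp R, interp, interpMap_map_comp_mul R M s hs, NatTrans.naturality_assoc]
  rfl

theorem Satisfies.kleisli (hs : M.mul.app X ≫ s = M.F.map s ≫ s) {c b a : C}
    {u₁ v₁ : c ⟶ M.F.obj b} {u₂ v₂ : b ⟶ M.F.obj a}
    (h₁ : Satisfies R M.F M.str s u₁ v₁) (h₂ : Satisfies R M.F M.str s u₂ v₂) :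
    Satisfies R M.F M.str s (u₁ ≫ M.F.map u₂ ≫ M.mul.app a)
      (v₁ ≫ M.F.map v₂ ≫ M.mul.app a) := by
  rw [Satisfies, interp_kleisli R M s hs, interp_kleisli R M s hs, h₁, h₂]

end Comp

section Ext

variable (R : RightClosed A) (F : StrongEndo A) {X : C} (s : F.F.obj X ⟶ X)

lemma assoc_hom_interpMap_str (v : V) (a : C) :
    (A.assoc _ v).hom.app (F.F.obj a) ≫ (A.act.obj _).map ((F.str v).app a) ≫
        interpMap R F.F F.str s ((A.act.obj v).obj a) =
      (A.act.map (hatg R X v a)).app (F.F.obj a) ≫ interpMap R F.F F.str s a := by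
  have hg := R.act_map_homEquiv_ev
    ((A.assoc ((R.rhom ((A.act.obj v).obj a)).obj X) v).hom.app a ≫
      R.ev ((A.act.obj v).obj a) X)
  rw [← hatg] at hg
  simp only [interpMap]
  rw [← reassoc_of% (F.str_assoc _ v a), ← F.F.map_comp_assoc, ← hg, F.F.map_comp_assoc,
    reassoc_of% (F.str_natural (hatg R X v a) a)]

lemma assoc_hom_interp_act_map_str (v : V) {c a : C} (u : c ⟶ F.F.obj a) :
    (A.assoc _ v).hom.app c ≫ interp R F.F F.str s ((A.act.obj v).map u ≫ (F.str v).app a) =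
      (A.act.map (hatg R X v a)).app c ≫ interp R F.F F.str s u := by
  simp only [interp, Functor.map_comp, Category.assoc]
  rw [← reassoc_of% ((A.assoc _ v).hom.naturality u), assoc_hom_interpMap_str,
    NatTrans.naturality_assoc]

theorem Satisfies.act_map_str (v : V) {c a : C} {u w : c ⟶ F.F.obj a}
    (h : Satisfies R F.F F.str s u w) :
    Satisfies R F.F F.str s ((A.act.obj v).map u ≫ (F.str v).app a)
      ((A.act.obj v).map w ≫ (F.str v).app a) := by
  rw [Satisfies, ← cancel_epi ((A.assoc _ v).hom.app c), assoc_hom_interp_act_map_str,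
    assoc_hom_interp_act_map_str, h]

end Ext

theorem EML.satisfies {S : MES A} {c a : C} {u v : c ⟶ S.T.F.obj a} (h : EML.{w} S u v)
    {X : C} {s : S.T.F.obj X ⟶ X} (hs : IsSAlgebra S s) :
    Satisfies S.R S.T.F S.T.str s u v := by
  induction h with
  | ax he => exact hs.2 _ he
  | refl => rfl
  | symm _ ih => exact ih.symm
  | trans _ _ ih₁ ih₂ => exact ih₁.trans ih₂
  | comp _ _ ih₁ ih₂ => exact Satisfies.kleisli S.R S.T s hs.1.2 ih₁ ih₂
  | ext v _ ih => exact Satisfies.act_map_str S.R S.T.toStrongEndo s v ih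
  | local_ D e he _ ih => exact Satisfies.of_jointlyEpi S.R S.T.F S.T.str s S.L he ih

/-- **Soundness of Equational Metalogic**: if `u ≡ v` is derivable from the
axioms of `S` in EML then every `S`-algebra satisfies `u ≡ v`.  In particular
each individual rule is sound; for the nontrivial rules (`Comp`, `Ext`, `Local`)
satisfaction by any Eilenberg–Moore algebra is closed under the corresponding
inference. -/
theorem eml_soundness (S : MES A) :
    (∀ {c a : C} (u v : c ⟶ S.T.F.obj a), EML.{w} S u v →
      ∀ (X : C) (s : S.T.F.obj X ⟶ X), IsSAlgebra S s →
        Satisfies S.R S.T.F S.T.str s u v) ∧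
    (∀ (X : C) (s : S.T.F.obj X ⟶ X), IsEMAlgebra S.T s →
      -- soundness of Comp
      (∀ {c b a : C} (u₁ v₁ : c ⟶ S.T.F.obj b) (u₂ v₂ : b ⟶ S.T.F.obj a),
        Satisfies S.R S.T.F S.T.str s u₁ v₁ →
        Satisfies S.R S.T.F S.T.str s u₂ v₂ →
        Satisfies S.R S.T.F S.T.str s
          (u₁ ≫ S.T.F.map u₂ ≫ S.T.mul.app a) (v₁ ≫ S.T.F.map v₂ ≫ S.T.mul.app a)) ∧
      -- soundness of Ext
      (∀ (v : V) {c a : C} (u w : c ⟶ S.T.F.obj a),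
        Satisfies S.R S.T.F S.T.str s u w →
        Satisfies S.R S.T.F S.T.str s
          ((A.act.obj v).map u ≫ (S.T.str v).app a)
          ((A.act.obj v).map w ≫ (S.T.str v).app a)) ∧
      -- soundness of Local
      (∀ {c a : C} (u v : c ⟶ S.T.F.obj a) {ι : Type w} (D : ι → C)
        (e : ∀ i, D i ⟶ c), JointlyEpi D e →
        (∀ i, Satisfies S.R S.T.F S.T.str s (e i ≫ u) (e i ≫ v)) →
        Satisfies S.R S.T.F S.T.str s u v)) := by
  refine ⟨fun u v h X s hs => h.satisfies hs, fun X s hs => ⟨?_, ?_, ?_⟩⟩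
  · intro c b a u₁ v₁ u₂ v₂ h₁ h₂
    exact Satisfies.kleisli S.R S.T s hs.2 h₁ h₂
  · intro v c a u w h
    exact Satisfies.act_map_str S.R S.T.toStrongEndo s v h
  · intro c a u v ι D e he h
    exact Satisfies.of_jointlyEpi S.R S.T.F S.T.str s S.L he h

end MonEq
end

section
/- Let T be a strong endofunctor (respectively, a strong monad) on a biclosed V-action C, and let X be an object of C. Then T-algebra structures s : TX → X (respectively, Eilenberg–Moore algebra structures for the monad) on X are in bijective correspondence with strong endofunctor morphisms (respectively, strong monad morphisms) T → K_X to the double-dualization monad, the correspondence sending a morphism τ to ε_X ∘ τ_X (for ε the counit of the clone adjunction at X) and an algebra s to the transpose m(s) of the interpretation maps ι(s)_A : C̲(A,X) ⊳ TA → X. -/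
open CategoryTheory MonoidalCategory Limits

universe w v₁ v₂ v₃ u₁ u₂ u₃

/-!
Everything is computed through the two adjunctions: a map into `⟦v,X⟧` is determined by
its composite with the evaluation `ev_v`, and `m(s)_a` corresponds in this way to `ι(s)_a`.
Naturality and strength of `m(s)`, and the monad-morphism laws for an Eilenberg–Moore
algebra `s`, then reduce to the axioms of the strength and of the monad.

The counit `ε_X` is evaluation at the name `𝟙 ⟶ C̲(X,X)` of the identity. Composing `m(s)_X`
with it undoes the strength by its unit axiom and returns `s`; the same computation reads off
the algebra laws of `s` from the monad-morphism laws of `m(s)`. Conversely, for a strong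
morphism `τ`, naturality and strength rewrite `ι(ε_X ∘ τ_X)_a` as `τ_a` followed by the clone
strength and evaluation at the name of `ev_a`; by the coherence of the action this composite
is `ev`, so `m(ε_X ∘ τ_X) = τ`.
-/

namespace MonEq

variable {V : Type u₁} [Category.{v₁} V] [MonoidalCategory V]
variable {C : Type u₂} [Category.{v₂} C] {A : MonAction V C}

attribute [reducible] Kobj

namespace MonAction

variable (A)

lemma map_whiskerRight_app_comp_assoc_hom {u u' : V} (g : u ⟶ u') (v : V) (c : C) :
    (A.act.map (g ▷ v)).app c ≫ (A.assoc u' v).hom.app c =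
      (A.assoc u v).hom.app c ≫ (A.act.map g).app ((A.act.obj v).obj c) := by
  simpa using A.assoc_natural g (𝟙 v) c

lemma map_leftUnitor_inv_app_comp_assoc_hom (u : V) (c : C) :
    (A.act.map (λ_ u).inv).app c ≫ (A.assoc (𝟙_ V) u).hom.app c =
      A.lam.inv.app ((A.act.obj u).obj c) := by
  rw [← cancel_mono (A.lam.hom.app _), Category.assoc, A.triangle_left,
    Iso.inv_hom_id_app, ← NatTrans.comp_app, ← Functor.map_comp]
  simp

lemma lam_inv_app_comp_map_app_comp_assoc_inv {w : V} (g : 𝟙_ V ⟶ w) (u : V) (c : C) :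
    A.lam.inv.app ((A.act.obj u).obj c) ≫ (A.act.map g).app ((A.act.obj u).obj c) ≫
        (A.assoc w u).inv.app c =
      (A.act.map ((λ_ u).inv ≫ g ▷ u)).app c := by
  rw [← cancel_mono ((A.assoc w u).hom.app c)]
  simp [map_whiskerRight_app_comp_assoc_hom,
    reassoc_of% (map_leftUnitor_inv_app_comp_assoc_hom A u c)]

end MonAction

namespace LeftClosed

variable (L : LeftClosed A)

lemma map_homEquiv_ev_s3 (v : V) {c x : C} (f : (A.act.obj v).obj c ⟶ x) :
    (A.act.obj v).map ((L.adj v).homEquiv c x f) ≫ L.ev v x = f := by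
  rw [LeftClosed.ev, ← Adjunction.homEquiv_counit]
  exact ((L.adj v).homEquiv c x).symm_apply_apply f

lemma hom_ext_s3 {v : V} {c x : C} {f g : c ⟶ (L.lhom v).obj x}
    (h : (A.act.obj v).map f ≫ L.ev v x = (A.act.obj v).map g ≫ L.ev v x) : f = g := by
  apply ((L.adj v).homEquiv c x).symm.injective
  simpa only [Adjunction.homEquiv_counit, LeftClosed.ev] using h

lemma eq_homEquiv_of_map_ev {v : V} {c x : C} {g : c ⟶ (L.lhom v).obj x}
    {f : (A.act.obj v).obj c ⟶ x} (h : (A.act.obj v).map g ≫ L.ev v x = f) :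
    g = (L.adj v).homEquiv c x f :=
  L.hom_ext_s3 (by rw [h, map_homEquiv_ev_s3])

lemma map_lmap_ev {v w : V} (h : v ⟶ w) (x : C) :
    (A.act.obj v).map (L.lmap h x) ≫ L.ev v x =
      (A.act.map h).app ((L.lhom w).obj x) ≫ L.ev w x :=
  L.map_homEquiv_ev_s3 v _

lemma lmap_comp_lmap {v w z : V} (h : v ⟶ w) (h' : z ⟶ v) (x : C) :
    L.lmap h x ≫ L.lmap h' x = L.lmap (h' ≫ h) x := by
  apply L.hom_ext_s3
  rw [Functor.map_comp, Category.assoc, map_lmap_ev,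
    reassoc_of% ((A.act.map h').naturality (L.lmap h x)), map_lmap_ev, map_lmap_ev]
  simp

def evAt {w : V} (g : 𝟙_ V ⟶ w) (x : C) : (L.lhom w).obj x ⟶ x :=
  L.lmap g x ≫ A.lam.inv.app ((L.lhom (𝟙_ V)).obj x) ≫ L.ev (𝟙_ V) x

lemma homEquiv_comp_evAt {w : V} (g : 𝟙_ V ⟶ w) {c x : C} (f : (A.act.obj w).obj c ⟶ x) :
    (L.adj w).homEquiv c x f ≫ L.evAt g x =
      A.lam.inv.app c ≫ (A.act.map g).app c ≫ f := by
  have hnat := A.lam.inv.naturality_assoc ((L.adj w).homEquiv c x f ≫ L.lmap g x)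
    (L.ev (𝟙_ V) x)
  simp only [Functor.id_map, Category.assoc] at hnat
  rw [evAt, hnat, Functor.map_comp, Category.assoc, map_lmap_ev,
    reassoc_of% ((A.act.map g).naturality ((L.adj w).homEquiv c x f)), map_homEquiv_ev_s3]

end LeftClosed

namespace RightClosed

variable (R : RightClosed A)

lemma map_homEquiv_ev_s3 (c : C) {v : V} {x : C} (f : (A.act.obj v).obj c ⟶ x) :
    (A.act.map ((R.adj c).homEquiv v x f)).app c ≫ R.ev c x = f := by
  simpa only [Adjunction.homEquiv_counit, Functor.flip_obj_map, RightClosed.ev] using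
    ((R.adj c).homEquiv v x).symm_apply_apply f

lemma hom_ext_s3 {c : C} {v : V} {x : C} {f g : v ⟶ (R.rhom c).obj x}
    (h : (A.act.map f).app c ≫ R.ev c x = (A.act.map g).app c ≫ R.ev c x) : f = g := by
  apply ((R.adj c).homEquiv v x).symm.injective
  simpa only [Adjunction.homEquiv_counit, Functor.flip_obj_map, RightClosed.ev] using h

lemma map_rmap_ev {a b : C} (f : a ⟶ b) (x : C) :
    (A.act.map (R.rmap f x)).app a ≫ R.ev a x =
      (A.act.obj ((R.rhom b).obj x)).map f ≫ R.ev b x :=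
  R.map_homEquiv_ev_s3 a _

lemma homEquiv_ev (c x : C) : (R.adj c).homEquiv _ x (R.ev c x) = 𝟙 _ :=
  R.hom_ext_s3 (by simp only [map_homEquiv_ev_s3, CategoryTheory.Functor.map_id, NatTrans.id_app,
    Category.id_comp])

def name_s3 {c x : C} (f : c ⟶ x) : 𝟙_ V ⟶ (R.rhom c).obj x :=
  (R.adj c).homEquiv _ x (A.lam.hom.app c ≫ f)

lemma map_name_ev {c x : C} (f : c ⟶ x) :
    (A.act.map (R.name_s3 f)).app c ≫ R.ev c x = A.lam.hom.app c ≫ f :=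
  R.map_homEquiv_ev_s3 c _

lemma map_name_id_ev (x : C) :
    (A.act.map (R.name_s3 (𝟙 x))).app x ≫ R.ev x x = A.lam.hom.app x :=
  (R.map_name_ev (𝟙 x)).trans (Category.comp_id _)

lemma name_comp_rmap {a b x : C} (f : a ⟶ b) (g : b ⟶ x) :
    R.name_s3 g ≫ R.rmap f x = R.name_s3 (f ≫ g) := by
  apply R.hom_ext_s3
  rw [Functor.map_comp, NatTrans.comp_app, Category.assoc, map_rmap_ev,
    ← (A.act.map (R.name_s3 g)).naturality_assoc, map_name_ev, map_name_ev]
  exact A.lam.hom.naturality_assoc f g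

lemma dd_comp_rmap_homEquiv (L : LeftClosed A) {u : V} {c X : C}
    (g : (A.act.obj u).obj c ⟶ X) :
    dd R L X u ≫ R.rmap ((L.adj u).homEquiv c X g) X = (R.adj c).homEquiv u X g := by
  apply R.hom_ext_s3
  rw [Functor.map_comp, NatTrans.comp_app, Category.assoc, R.map_rmap_ev,
    ← (A.act.map (dd R L X u)).naturality_assoc, dd, R.map_homEquiv_ev_s3, L.map_homEquiv_ev_s3,
    R.map_homEquiv_ev_s3]

end RightClosed

lemma StrongEndo.map_app_comp_str_comp_map (T : StrongEndo A) {v : V} (e : 𝟙_ V ⟶ v) {c : C}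
    {w : (A.act.obj v).obj c ⟶ c} (hw : (A.act.map e).app c ≫ w = A.lam.hom.app c) :
    (A.act.map e).app (T.F.obj c) ≫ (T.str v).app c ≫ T.F.map w =
      A.lam.hom.app (T.F.obj c) := by
  rw [reassoc_of% (T.str_natural e c), ← Functor.map_comp, hw, T.str_lam]

variable (R : RightClosed A) (L : LeftClosed A)

section DoubleDualization

lemma map_hatg_ev (X : C) (v : V) (a : C) :
    (A.act.map (hatg R X v a)).app a ≫ R.ev a X =
      (A.assoc ((R.rhom ((A.act.obj v).obj a)).obj X) v).hom.app a ≫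
        R.ev ((A.act.obj v).obj a) X :=
  R.map_homEquiv_ev_s3 a _

lemma leftUnitor_inv_comp_name_whiskerRight_comp_hatg (X : C) {v : V} {a : C}
    (f : (A.act.obj v).obj a ⟶ X) :
    (λ_ v).inv ≫ R.name_s3 f ▷ v ≫ hatg R X v a = (R.adj a).homEquiv v X f := by
  apply R.hom_ext_s3
  rw [R.map_homEquiv_ev_s3, ← Category.assoc, Functor.map_comp, NatTrans.comp_app, Category.assoc,
    map_hatg_ev, ← A.lam_inv_app_comp_map_app_comp_assoc_inv]
  simp [R.map_name_ev]

lemma map_map_comp_cloneStr_ev (X : C) {Y c : C} (v : V) (a : C)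
    (f : c ⟶ (L.lhom ((R.rhom a).obj X)).obj Y) :
    (A.act.obj ((R.rhom ((A.act.obj v).obj a)).obj X)).map
        ((A.act.obj v).map f ≫ cloneStr R L X Y v a) ≫
        L.ev ((R.rhom ((A.act.obj v).obj a)).obj X) Y =
      (A.assoc ((R.rhom ((A.act.obj v).obj a)).obj X) v).inv.app c ≫
        (A.act.map (hatg R X v a)).app c ≫
        (A.act.obj ((R.rhom a).obj X)).map f ≫ L.ev ((R.rhom a).obj X) Y := by
  have hassoc := (A.assoc ((R.rhom ((A.act.obj v).obj a)).obj X) v).inv.naturality_assoc f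
    ((A.act.map (hatg R X v a)).app _ ≫ L.ev ((R.rhom a).obj X) Y)
  simp only [Functor.comp_map] at hassoc
  rw [Functor.map_comp, Category.assoc, cloneStr, L.map_homEquiv_ev_s3, hassoc,
    ← (A.act.map (hatg R X v a)).naturality_assoc]

lemma cleval_eq_evAt (X : C) : cleval R L X = L.evAt (R.name_s3 (𝟙 X)) X := by
  simp only [RightClosed.name_s3, Functor.id_obj, Category.comp_id]
  rfl

lemma Kmap_comp_evAt_name (X : C) {a b : C} (f : a ⟶ b) (g : b ⟶ X) :
    Kmap R L X f ≫ L.evAt (R.name_s3 g) X = L.evAt (R.name_s3 (f ≫ g)) X := by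
  rw [Kmap, LeftClosed.evAt, ← Category.assoc, L.lmap_comp_lmap, R.name_comp_rmap]
  rfl

lemma ddUnit_comp_cleval (X : C) : ddUnit R L X X ≫ cleval R L X = 𝟙 X := by
  rw [ddUnit, cleval_eq_evAt, L.homEquiv_comp_evAt, R.map_name_ev]
  simp

lemma cloneStr_comp_Kmap_ev_comp_cleval (X a : C) :
    cloneStr R L X X ((R.rhom a).obj X) a ≫ Kmap R L X (R.ev a X) ≫ cleval R L X =
      L.ev ((R.rhom a).obj X) X := by
  rw [cleval_eq_evAt, Kmap_comp_evAt_name, Category.comp_id, cloneStr, L.homEquiv_comp_evAt,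
    reassoc_of% (A.lam_inv_app_comp_map_app_comp_assoc_inv _ _ _), ← NatTrans.comp_app_assoc,
    ← Functor.map_comp, Category.assoc, leftUnitor_inv_comp_name_whiskerRight_comp_hatg,
    R.homEquiv_ev]
  simp

lemma homEquiv_str_comp_cleval (T : StrongEndo A) (X : C) {c : C}
    {w : (A.act.obj ((R.rhom X).obj X)).obj c ⟶ c}
    (hw : (A.act.map (R.name_s3 (𝟙 X))).app c ≫ w = A.lam.hom.app c) (t : T.F.obj c ⟶ X) :
    (L.adj _).homEquiv _ X ((T.str ((R.rhom X).obj X)).app c ≫ T.F.map w ≫ t) ≫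
      cleval R L X = t := by
  rw [cleval_eq_evAt, L.homEquiv_comp_evAt,
    reassoc_of% (T.map_app_comp_str_comp_map _ hw), Iso.inv_hom_id_app_assoc]

end DoubleDualization

section Interpretation

variable (T : StrongEndo A) {X : C} (s : T.F.obj X ⟶ X)

lemma map_app_comp_interpMap {v : V} {a : C} (h : v ⟶ (R.rhom a).obj X) :
    (A.act.map h).app (T.F.obj a) ≫ interpMap R T.F T.str s a =
      (T.str v).app a ≫ T.F.map ((A.act.map h).app a ≫ R.ev a X) ≫ s := by
  rw [interpMap, reassoc_of% (T.str_natural h a), Functor.map_comp_assoc]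

lemma map_map_comp_interpMap {a b : C} (f : a ⟶ b) :
    (A.act.obj ((R.rhom b).obj X)).map (T.F.map f) ≫ interpMap R T.F T.str s b =
      (T.str ((R.rhom b).obj X)).app a ≫
        T.F.map ((A.act.obj ((R.rhom b).obj X)).map f ≫ R.ev b X) ≫ s := by
  simpa [interpMap] using (T.str ((R.rhom b).obj X)).naturality_assoc f (T.F.map (R.ev b X) ≫ s)

lemma map_mOf_ev (a : C) :
    (A.act.obj ((R.rhom a).obj X)).map (mOf R L T.F T.str s a) ≫ L.ev ((R.rhom a).obj X) X =
      interpMap R T.F T.str s a :=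
  L.map_homEquiv_ev_s3 _ _

lemma mOf_natural {a b : C} (f : a ⟶ b) :
    T.F.map f ≫ mOf R L T.F T.str s b = mOf R L T.F T.str s a ≫ Kmap R L X f := by
  apply L.hom_ext_s3
  have hnat := (A.act.map (R.rmap f X)).naturality_assoc (mOf R L T.F T.str s a)
    (L.ev ((R.rhom a).obj X) X)
  simp only [Functor.map_comp, Category.assoc, map_mOf_ev, map_map_comp_interpMap, Kmap,
    L.map_lmap_ev, hnat, map_app_comp_interpMap, R.map_rmap_ev]

lemma mOf_strong (v : V) (a : C) :
    (A.act.obj v).map (mOf R L T.F T.str s a) ≫ cloneStr R L X X v a =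
      (T.str v).app a ≫ mOf R L T.F T.str s ((A.act.obj v).obj a) := by
  apply L.hom_ext_s3
  rw [map_map_comp_cloneStr_ev, map_mOf_ev, map_app_comp_interpMap, map_hatg_ev,
    Functor.map_comp_assoc, reassoc_of% (T.str_assoc _ v a), Iso.inv_hom_id_app_assoc,
    Functor.map_comp, Category.assoc, map_mOf_ev, interpMap]

lemma mOf_comp_cleval : mOf R L T.F T.str s X ≫ cleval R L X = s :=
  homEquiv_str_comp_cleval R L T X (R.map_name_id_ev X) s

lemma mOf_comp_Kmap_mOf_comp_ddMult (a : C) :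
    mOf R L T.F T.str s (T.F.obj a) ≫ Kmap R L X (mOf R L T.F T.str s a) ≫ ddMult R L X a =
      (L.adj ((R.rhom a).obj X)).homEquiv _ X
        ((T.str ((R.rhom a).obj X)).app (T.F.obj a) ≫
          T.F.map ((T.str ((R.rhom a).obj X)).app a ≫ T.F.map (R.ev a X)) ≫
          T.F.map s ≫ s) := by
  have hρ : dd R L X ((R.rhom a).obj X) ≫ R.rmap (mOf R L T.F T.str s a) X =
      (R.adj (T.F.obj a)).homEquiv _ X (interpMap R T.F T.str s a) :=
    R.dd_comp_rmap_homEquiv L _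
  rw [Kmap, ddMult, L.lmap_comp_lmap, hρ]
  apply L.eq_homEquiv_of_map_ev
  rw [Functor.map_comp, Category.assoc, L.map_lmap_ev, (A.act.map _).naturality_assoc,
    map_mOf_ev, map_app_comp_interpMap, R.map_homEquiv_ev_s3]
  simp [interpMap]

end Interpretation

lemma mOf_cleval_of_strong (T : StrongEndo A) (X : C) (τ : ∀ a : C, T.F.obj a ⟶ Kobj R L X a)
    (hnat : ∀ {a b : C} (f : a ⟶ b), T.F.map f ≫ τ b = τ a ≫ Kmap R L X f)
    (hstr : ∀ (v : V) (a : C), (A.act.obj v).map (τ a) ≫ cloneStr R L X X v a =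
        (T.str v).app a ≫ τ ((A.act.obj v).obj a)) (a : C) :
    mOf R L T.F T.str (τ X ≫ cleval R L X) a = τ a := by
  apply L.hom_ext_s3
  rw [map_mOf_ev, interpMap, reassoc_of% (hnat (R.ev a X)), ← reassoc_of% (hstr _ a),
    cloneStr_comp_Kmap_ev_comp_cleval]

section Monad

variable (M : StrongMonad A) {X : C} (s : M.F.obj X ⟶ X)

lemma unit_comp_mOf (hs : M.unit.app X ≫ s = 𝟙 X) (a : C) :
    M.unit.app a ≫ mOf R L M.F M.str s a = ddUnit R L X a := by
  apply L.hom_ext_s3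
  have hnat := M.unit.naturality_assoc (R.ev a X) s
  simp only [Functor.id_map] at hnat
  rw [Functor.map_comp, Category.assoc, map_mOf_ev, interpMap, reassoc_of% (M.unit_str _ a),
    ← hnat, hs]
  exact (Category.comp_id _).trans (L.map_homEquiv_ev_s3 _ (R.ev a X)).symm

lemma map_mul_comp_interpMap (a : C) :
    (A.act.obj ((R.rhom a).obj X)).map (M.mul.app a) ≫ interpMap R M.F M.str s a =
      (M.str ((R.rhom a).obj X)).app (M.F.obj a) ≫
        M.F.map ((M.str ((R.rhom a).obj X)).app a ≫ M.F.map (R.ev a X)) ≫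
        M.mul.app X ≫ s := by
  have hnat := M.mul.naturality_assoc (R.ev a X) s
  simp only [Functor.comp_map] at hnat
  rw [interpMap, ← reassoc_of% (M.mul_str _ a), ← hnat, Functor.map_comp_assoc]

lemma mul_comp_mOf (hs : M.mul.app X ≫ s = M.F.map s ≫ s) (a : C) :
    M.mul.app a ≫ mOf R L M.F M.str s a =
      mOf R L M.F M.str s (M.F.obj a) ≫ Kmap R L X (mOf R L M.F M.str s a) ≫
        ddMult R L X a := by
  rw [mOf_comp_Kmap_mOf_comp_ddMult, ← hs, ← map_mul_comp_interpMap]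
  apply L.eq_homEquiv_of_map_ev
  rw [Functor.map_comp, Category.assoc, map_mOf_ev]

lemma isEMAlgebra_of_mOf (hunit : M.unit.app X ≫ mOf R L M.F M.str s X = ddUnit R L X X)
    (hmul : M.mul.app X ≫ mOf R L M.F M.str s X =
      mOf R L M.F M.str s (M.F.obj X) ≫ Kmap R L X (mOf R L M.F M.str s X) ≫ ddMult R L X X) :
    IsEMAlgebra M s := by
  constructor
  · calc M.unit.app X ≫ s = M.unit.app X ≫ mOf R L M.F M.str s X ≫ cleval R L X := by
          rw [mOf_comp_cleval]
      _ = 𝟙 X := by rw [reassoc_of% hunit, ddUnit_comp_cleval]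
  · calc M.mul.app X ≫ s = M.mul.app X ≫ mOf R L M.F M.str s X ≫ cleval R L X := by
          rw [mOf_comp_cleval]
      _ = (mOf R L M.F M.str s (M.F.obj X) ≫ Kmap R L X (mOf R L M.F M.str s X) ≫
            ddMult R L X X) ≫ cleval R L X := by simp only [reassoc_of% hmul, Category.assoc]
      _ = M.F.map s ≫ s := by
          rw [mOf_comp_Kmap_mOf_comp_ddMult]
          exact homEquiv_str_comp_cleval R L M.toStrongEndo X
            (M.map_app_comp_str_comp_map _ (R.map_name_id_ev X)) _

end Monad

/-- **Algebras vs. morphisms into the double dualization** (Theorem 3.? of the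
paper).  For a strong endofunctor (resp. strong monad) `T` on a biclosed
`V`-action and `X ∈ C`, the `T`-algebra (resp. Eilenberg–Moore algebra)
structures on `X` are in bijective correspondence with the strong endofunctor
(resp. strong monad) morphisms `T ⟶ K_X`, where `τ ↦ ε_X ∘ τ_X` and
`s ↦ m(s)` (the transpose of the interpretation maps `ι(s)_a`). -/
theorem algebras_biject_with_strong_morphisms
    {V : Type u₁} [Category.{v₁} V] [MonoidalCategory V]
    {C : Type u₂} [Category.{v₂} C]
    (A : MonAction V C) (R : RightClosed A) (L : LeftClosed A) (X : C) :
    -- strong endofunctor case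
    (∀ T : StrongEndo A,
      (∀ s : T.F.obj X ⟶ X,
        -- `m(s)` is natural
        (∀ {a b : C} (f : a ⟶ b),
          T.F.map f ≫ mOf R L T.F T.str s b = mOf R L T.F T.str s a ≫ Kmap R L X f) ∧
        -- `m(s)` commutes with the strengths (w.r.t. the clone strength on `K_X`)
        (∀ (v : V) (a : C),
          (A.act.obj v).map (mOf R L T.F T.str s a) ≫ cloneStr R L X X v a =
            (T.str v).app a ≫ mOf R L T.F T.str s ((A.act.obj v).obj a)) ∧
        -- one round trip
        mOf R L T.F T.str s X ≫ cleval R L X = s) ∧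
      -- the other round trip
      (∀ τ : ∀ a : C, T.F.obj a ⟶ Kobj R L X a,
        (∀ {a b : C} (f : a ⟶ b), T.F.map f ≫ τ b = τ a ≫ Kmap R L X f) →
        (∀ (v : V) (a : C),
          (A.act.obj v).map (τ a) ≫ cloneStr R L X X v a =
            (T.str v).app a ≫ τ ((A.act.obj v).obj a)) →
        ∀ a : C, mOf R L T.F T.str (τ X ≫ cleval R L X) a = τ a)) ∧
    -- strong monad case: the above bijection restricts to Eilenberg–Moore
    -- algebras and strong monad morphisms
    (∀ (M : StrongMonad A) (s : M.F.obj X ⟶ X),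
      IsEMAlgebra M s ↔
        ((∀ a : C, M.unit.app a ≫ mOf R L M.F M.str s a = ddUnit R L X a) ∧
         (∀ a : C, M.mul.app a ≫ mOf R L M.F M.str s a =
            mOf R L M.F M.str s (M.F.obj a) ≫
              Kmap R L X (mOf R L M.F M.str s a) ≫ ddMult R L X a))) :=
  ⟨fun T => ⟨fun s => ⟨mOf_natural R L T s, mOf_strong R L T s, mOf_comp_cleval R L T s⟩,
      fun τ hnat hstr => mOf_cleval_of_strong R L T X τ hnat hstr⟩,
    fun M s => ⟨fun hs => ⟨unit_comp_mOf R L M s hs.1, mul_comp_mOf R L M s hs.2⟩,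
      fun h => isEMAlgebra_of_mOf R L M s (h.1 X) (h.2 X)⟩⟩

end MonEq
end

section
/- Let (F,φ) be a strong endofunctor on a left-closed V-action (C,⊳), and let A be a full subcategory of the category of F-algebras such that the forgetful functor A → C has a left adjoint sending X to an F-algebra (TX, τ_X : FTX → TX) in A, with unit η_X : X → TX. Suppose A is closed under the lifted left-hom endofunctors ⟦V,−⟧ (sending (X,s) to (⟦V,X⟧, s_V)) for all V ∈ V. Then for every (Y,t) ∈ A and every map f : V ⊳ X → Y in C there exists a unique map f# : V ⊳ TX → Y such that f# ∘ (V ⊳ η_X) = f and f# ∘ (V ⊳ τ_X) = t ∘ F(f#) ∘ φ_{V,TX}. -/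
open CategoryTheory MonoidalCategory Limits

universe w v₁ v₂ v₃ u₁ u₂ u₃

namespace MonEq

section

variable {V : Type u₁} [Category.{v₁} V] [MonoidalCategory V]
  {C : Type u₂} [Category.{v₂} C] {A : MonAction V C}

lemma homEquiv_symm_map_comp_liftAlg (L : LeftClosed A) (T : C ⥤ C)
    (σ : ∀ v : V, T ⋙ A.act.obj v ⟶ A.act.obj v ⋙ T)
    {Y Z : C} (t : T.obj Y ⟶ Y) (v : V) (g : Z ⟶ (L.lhom v).obj Y) :
    ((L.adj v).homEquiv _ Y).symm (T.map g ≫ liftAlg L T σ t v) =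
      (σ v).app Z ≫ T.map (((L.adj v).homEquiv Z Y).symm g) ≫ t := by
  rw [Adjunction.homEquiv_naturality_left_symm, liftAlg, Equiv.symm_apply_apply,
    ← Category.assoc, ← Functor.comp_map, (σ v).naturality, Category.assoc,
    Functor.comp_map, ← T.map_comp_assoc, Adjunction.homEquiv_counit, LeftClosed.ev]

lemma map_comp_liftAlg_eq_iff (L : LeftClosed A) (T : C ⥤ C)
    (σ : ∀ v : V, T ⋙ A.act.obj v ⟶ A.act.obj v ⋙ T)
    {Y Z : C} (u : T.obj Z ⟶ Z) (t : T.obj Y ⟶ Y) (v : V)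
    (g : (A.act.obj v).obj Z ⟶ Y) :
    T.map ((L.adj v).homEquiv Z Y g) ≫ liftAlg L T σ t v = u ≫ (L.adj v).homEquiv Z Y g ↔
      (A.act.obj v).map u ≫ g = (σ v).app Z ≫ T.map g ≫ t := by
  rw [← ((L.adj v).homEquiv _ Y).symm.apply_eq_iff_eq, homEquiv_symm_map_comp_liftAlg,
    Adjunction.homEquiv_naturality_left_symm, Equiv.symm_apply_apply, eq_comm]

end

theorem unique_strong_extension_general
    {V : Type u₁} [Category.{v₁} V] [MonoidalCategory V]
    {C : Type u₂} [Category.{v₂} C]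
    {A : MonAction V C} (L : LeftClosed A) (Fs : StrongEndo A)
    (P : ∀ X : C, (Fs.F.obj X ⟶ X) → Prop)
    (hP : ∀ (X : C) (s : Fs.F.obj X ⟶ X), P X s →
      ∀ v : V, P ((L.lhom v).obj X) (liftAlg L Fs.F Fs.str s v))
    (T : C → C) (τ : ∀ X : C, Fs.F.obj (T X) ⟶ T X) (η : ∀ X : C, X ⟶ T X)
    (universal : ∀ (X : C) {Y : C} (t : Fs.F.obj Y ⟶ Y), P Y t →
      ∀ f : X ⟶ Y, ∃! g : T X ⟶ Y, Fs.F.map g ≫ t = τ X ≫ g ∧ η X ≫ g = f) :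
    ∀ {Y : C} (t : Fs.F.obj Y ⟶ Y), P Y t → ∀ (v : V) (X : C)
      (f : (A.act.obj v).obj X ⟶ Y),
      ∃! fs : (A.act.obj v).obj (T X) ⟶ Y,
        (A.act.obj v).map (η X) ≫ fs = f ∧
        (A.act.obj v).map (τ X) ≫ fs =
          (Fs.str v).app (T X) ≫ Fs.F.map fs ≫ t := by
  intro Y t hY v X f
  -- transposing along `v ⊳ (-) ⊣ ⟦v,-⟧` turns the two equations into the universal property
  -- of the free algebra on `X` against the lifted algebra `(⟦v,Y⟧, t_v)`
  refine (((L.adj v).homEquiv (T X) Y).existsUnique_congr fun fs => ?_).mpr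
    (universal X _ (hP Y t hY v) ((L.adj v).homEquiv X Y f))
  rw [map_comp_liftAlg_eq_iff, ← Adjunction.homEquiv_naturality_left,
    ((L.adj v).homEquiv _ Y).apply_eq_iff_eq, and_comm]

/-- **Parametrized induction for free algebras** (Theorem 4.?(1) of the paper).
Let `(F,φ)` be a strong endofunctor on a left-closed `V`-action and let `P`
describe a full subcategory of `F`-algebras that is closed under the lifted
left-hom endofunctors, and whose forgetful functor to `C` has a left adjoint
`X ↦ (T X, τ X)` with unit `η X`.  Then for every algebra `(Y,t)` in the
subcategory and every `f : v ⊳ X ⟶ Y` there is a unique extension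
`f# : v ⊳ T X ⟶ Y` with `f# ∘ (v ⊳ η X) = f` and
`f# ∘ (v ⊳ τ X) = t ∘ F f# ∘ φ`. -/
theorem unique_strong_extension
    {V : Type u₁} [Category.{v₁} V] [MonoidalCategory V]
    {C : Type u₂} [Category.{v₂} C]
    {A : MonAction V C} (L : LeftClosed A) (Fs : StrongEndo A)
    (P : ∀ X : C, (Fs.F.obj X ⟶ X) → Prop)
    (hP : ∀ (X : C) (s : Fs.F.obj X ⟶ X), P X s →
      ∀ v : V, P ((L.lhom v).obj X) (liftAlg L Fs.F Fs.str s v))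
    (T : C → C) (τ : ∀ X : C, Fs.F.obj (T X) ⟶ T X) (η : ∀ X : C, X ⟶ T X)
    (hτ : ∀ X : C, P (T X) (τ X))
    (universal : ∀ (X : C) {Y : C} (t : Fs.F.obj Y ⟶ Y), P Y t →
      ∀ f : X ⟶ Y, ∃! g : T X ⟶ Y, Fs.F.map g ≫ t = τ X ≫ g ∧ η X ≫ g = f) :
    ∀ {Y : C} (t : Fs.F.obj Y ⟶ Y), P Y t → ∀ (v : V) (X : C)
      (f : (A.act.obj v).obj X ⟶ Y),
      ∃! fs : (A.act.obj v).obj (T X) ⟶ Y,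
        (A.act.obj v).map (η X) ≫ fs = f ∧
        (A.act.obj v).map (τ X) ≫ fs =
          (Fs.str v).app (T X) ≫ Fs.F.map fs ≫ t :=
  unique_strong_extension_general L Fs P hP T τ η universal

end MonEq
end

section
/- Let (F,φ) be a strong endofunctor on a left-closed V-action (C,⊳), and let A be a full subcategory of the category of F-algebras, closed under the lifted left-hom endofunctors ⟦V,−⟧ for all V ∈ V, such that the forgetful functor A → C has a left adjoint sending X to (TX, τ_X : FTX → TX) ∈ A. Then the monad T = (T,η,μ) induced by this adjunction is canonically a strong monad: there is a unique natural transformation φ̂_{V,C} : V ⊳ TC → T(V ⊳ C) satisfying φ̂_{V,C} ∘ (V ⊳ η_C) = η_{V⊳C} and φ̂_{V,C} ∘ (V ⊳ τ_C) = τ_{V⊳C} ∘ F(φ̂_{V,C}) ∘ φ_{V,TC}, and φ̂ is a strength making (T,φ̂,η,μ) a strong monad. -/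
open CategoryTheory MonoidalCategory Limits

universe w v₁ v₂ v₃ u₁ u₂ u₃

/-!
Transposing along `v ⊳ (-) ⊣ ⟦v,-⟧`, a map `g : v ⊳ X ⟶ Y` with
`g ∘ (v ⊳ t) = s ∘ F g ∘ φ_{v,X}` is the same as an `F`-algebra map from `t` to the lifted
algebra `s_v`, and `s_v` satisfies `P` whenever `s` does. So freeness of `τ_X` makes such a
`g : v ⊳ TX ⟶ Y` exist and be unique with prescribed `g ∘ (v ⊳ η_X)`; the value `η_{v ⊳ X}`
defines `φ̂`. Each strength and monad axiom then holds because both of its sides are maps of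
this kind (they are stable under composing with algebra maps, reindexing along `v ⟶ w`, `λ` and
`α`) that agree after precomposition with `v ⊳ η`.
-/

namespace MonEq

section

variable {V : Type u₁} [Category.{v₁} V] [MonoidalCategory V]
variable {C : Type u₂} [Category.{v₂} C] {A : MonAction V C}

def IsAlgHom (F : C ⥤ C) {X Y : C} (t : F.obj X ⟶ X) (s : F.obj Y ⟶ Y) (k : X ⟶ Y) : Prop :=
  F.map k ≫ s = t ≫ k

def IsParamHom (Fs : StrongEndo A) (v : V) {X Y : C} (t : Fs.F.obj X ⟶ X)
    (s : Fs.F.obj Y ⟶ Y) (g : (A.act.obj v).obj X ⟶ Y) : Prop :=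
  (A.act.obj v).map t ≫ g = (Fs.str v).app X ≫ Fs.F.map g ≫ s

theorem IsAlgHom.comp {F : C ⥤ C} {X Y Z : C} {t : F.obj X ⟶ X} {s : F.obj Y ⟶ Y}
    {r : F.obj Z ⟶ Z} {k : X ⟶ Y} {k' : Y ⟶ Z} (hk : IsAlgHom F t s k)
    (hk' : IsAlgHom F s r k') : IsAlgHom F t r (k ≫ k') := by
  unfold IsAlgHom at *
  rw [Functor.map_comp_assoc, hk', reassoc_of% hk]

section ParamHom

variable {Fs : StrongEndo A} {v : V} {X Y Z : C}
  {t : Fs.F.obj X ⟶ X} {s : Fs.F.obj Y ⟶ Y} {r : Fs.F.obj Z ⟶ Z}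

theorem IsParamHom.comp_isAlgHom {g : (A.act.obj v).obj X ⟶ Y} {k : Y ⟶ Z}
    (hg : IsParamHom Fs v t s g) (hk : IsAlgHom Fs.F s r k) :
    IsParamHom Fs v t r (g ≫ k) := by
  unfold IsParamHom IsAlgHom at *
  rw [reassoc_of% hg, Functor.map_comp_assoc, hk]

theorem IsParamHom.map_isAlgHom_comp {W : C} {t' : Fs.F.obj W ⟶ W} {k : W ⟶ X}
    {g : (A.act.obj v).obj X ⟶ Y} (hk : IsAlgHom Fs.F t' t k) (hg : IsParamHom Fs v t s g) :
    IsParamHom Fs v t' s ((A.act.obj v).map k ≫ g) := by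
  unfold IsParamHom IsAlgHom at *
  have hstr := (Fs.str v).naturality k
  simp only [Functor.comp_map] at hstr
  rw [← Functor.map_comp_assoc, ← hk, Functor.map_comp_assoc, hg, reassoc_of% hstr,
    Functor.map_comp_assoc]

theorem IsParamHom.actMap_comp {w : V} (h : v ⟶ w) {g : (A.act.obj w).obj X ⟶ Y}
    (hg : IsParamHom Fs w t s g) : IsParamHom Fs v t s ((A.act.map h).app X ≫ g) := by
  unfold IsParamHom at *
  rw [NatTrans.naturality_assoc, hg, reassoc_of% (Fs.str_natural h X), Functor.map_comp_assoc]

theorem isParamHom_lam : IsParamHom Fs (𝟙_ V) t t (A.lam.hom.app X) := by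
  unfold IsParamHom
  rw [reassoc_of% (Fs.str_lam X)]
  exact A.lam.hom.naturality t

theorem IsParamHom.assoc {u : V} {g : (A.act.obj v).obj X ⟶ Y} {g' : (A.act.obj u).obj Y ⟶ Z}
    (hg : IsParamHom Fs v t s g) (hg' : IsParamHom Fs u s r g') :
    IsParamHom Fs (u ⊗ v) t r
      ((A.assoc u v).hom.app X ≫ (A.act.obj u).map g ≫ g') := by
  unfold IsParamHom at *
  have hstr := (Fs.str u).naturality g
  simp only [Functor.comp_map] at hstr
  have hα := (A.assoc u v).hom.naturality t
  simp only [Functor.comp_map] at hα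
  rw [reassoc_of% hα, ← Functor.map_comp_assoc, hg, Functor.map_comp, Functor.map_comp,
    Category.assoc, Category.assoc, hg', reassoc_of% hstr, Functor.map_comp_assoc,
    Functor.map_comp_assoc, reassoc_of% (Fs.str_assoc u v X)]

end ParamHom

section Transpose

variable (L : LeftClosed A) {Fs : StrongEndo A} {v : V} {X Y : C}

theorem homEquiv_symm_map_comp_liftAlg_s7 (s : Fs.F.obj Y ⟶ Y) (k : X ⟶ (L.lhom v).obj Y) :
    ((L.adj v).homEquiv _ Y).symm (Fs.F.map k ≫ liftAlg L Fs.F Fs.str s v) =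
      (Fs.str v).app X ≫ Fs.F.map (((L.adj v).homEquiv X Y).symm k) ≫ s := by
  have hstr := (Fs.str v).naturality k
  simp only [Functor.comp_map] at hstr
  rw [Adjunction.homEquiv_naturality_left_symm, liftAlg, Equiv.symm_apply_apply,
    reassoc_of% hstr, Adjunction.homEquiv_counit, Functor.map_comp_assoc, LeftClosed.ev]

theorem isParamHom_iff_isAlgHom_homEquiv (t : Fs.F.obj X ⟶ X) (s : Fs.F.obj Y ⟶ Y)
    (g : (A.act.obj v).obj X ⟶ Y) :
    IsParamHom Fs v t s g ↔
      IsAlgHom Fs.F t (liftAlg L Fs.F Fs.str s v) ((L.adj v).homEquiv X Y g) := by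
  rw [IsAlgHom, ← ((L.adj v).homEquiv _ Y).symm.injective.eq_iff,
    homEquiv_symm_map_comp_liftAlg_s7, Adjunction.homEquiv_naturality_left_symm,
    Equiv.symm_apply_apply, eq_comm, IsParamHom]

theorem existsUnique_isParamHom {X' : C} {ηX : X ⟶ X'} {t : Fs.F.obj X' ⟶ X'}
    {s : Fs.F.obj Y ⟶ Y} {h : (A.act.obj v).obj X ⟶ Y}
    (hfree : ∃! k : X' ⟶ (L.lhom v).obj Y,
      IsAlgHom Fs.F t (liftAlg L Fs.F Fs.str s v) k ∧ ηX ≫ k = (L.adj v).homEquiv X Y h) :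
    ∃! g : (A.act.obj v).obj X' ⟶ Y,
      IsParamHom Fs v t s g ∧ (A.act.obj v).map ηX ≫ g = h := by
  refine ((L.adj v).homEquiv X' Y).existsUnique_congr (fun g => ?_) |>.mpr hfree
  rw [isParamHom_iff_isAlgHom_homEquiv L, ← Adjunction.homEquiv_naturality_left,
    ((L.adj v).homEquiv X Y).apply_eq_iff_eq]

end Transpose

end

theorem induced_monad_is_strong_general
    {V : Type u₁} [Category.{v₁} V] [MonoidalCategory V]
    {C : Type u₂} [Category.{v₂} C]
    {A : MonAction V C} (L : LeftClosed A) (Fs : StrongEndo A)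
    (P : ∀ X : C, (Fs.F.obj X ⟶ X) → Prop)
    (hP : ∀ (X : C) (s : Fs.F.obj X ⟶ X), P X s →
      ∀ v : V, P ((L.lhom v).obj X) (liftAlg L Fs.F Fs.str s v))
    -- the monad `(T,η,μ)` induced by the adjunction
    (T : C ⥤ C) (τ : ∀ X : C, Fs.F.obj (T.obj X) ⟶ T.obj X)
    (η : 𝟭 C ⟶ T) (μ : T ⋙ T ⟶ T)
    (hτ : ∀ X : C, P (T.obj X) (τ X))
    (hτnat : ∀ {X Y : C} (f : X ⟶ Y),
      Fs.F.map (T.map f) ≫ τ Y = τ X ≫ T.map f)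
    (universal : ∀ (X : C) {Y : C} (t : Fs.F.obj Y ⟶ Y), P Y t →
      ∀ f : X ⟶ Y, ∃! g : T.obj X ⟶ Y,
        Fs.F.map g ≫ t = τ X ≫ g ∧ η.app X ≫ g = f)
    -- `μ_X` is the unique homomorphic extension of the identity on `T X`
    (hμ_ext : ∀ X : C, η.app (T.obj X) ≫ μ.app X = 𝟙 (T.obj X))
    (hμ_hom : ∀ X : C, Fs.F.map (μ.app X) ≫ τ X = τ (T.obj X) ≫ μ.app X) :
    -- there is a unique family satisfying the two characterizing diagrams
    (∃! φh : ∀ (v : V) (X : C),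
        (A.act.obj v).obj (T.obj X) ⟶ T.obj ((A.act.obj v).obj X),
      (∀ (v : V) (X : C),
        (A.act.obj v).map (η.app X) ≫ φh v X = η.app ((A.act.obj v).obj X)) ∧
      (∀ (v : V) (X : C),
        (A.act.obj v).map (τ X) ≫ φh v X =
          (Fs.str v).app (T.obj X) ≫ Fs.F.map (φh v X) ≫ τ ((A.act.obj v).obj X))) ∧
    -- and any such family is a strength making `(T,η,μ)` a strong monad
    (∀ φh : ∀ (v : V) (X : C),
        (A.act.obj v).obj (T.obj X) ⟶ T.obj ((A.act.obj v).obj X),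
      ((∀ (v : V) (X : C),
        (A.act.obj v).map (η.app X) ≫ φh v X = η.app ((A.act.obj v).obj X)) ∧
       (∀ (v : V) (X : C),
        (A.act.obj v).map (τ X) ≫ φh v X =
          (Fs.str v).app (T.obj X) ≫ Fs.F.map (φh v X) ≫ τ ((A.act.obj v).obj X))) →
      -- naturality in `X`
      (∀ (v : V) {X Y : C} (f : X ⟶ Y),
        (A.act.obj v).map (T.map f) ≫ φh v Y = φh v X ≫ T.map ((A.act.obj v).map f)) ∧
      -- naturality in `v`
      (∀ {v w : V} (h : v ⟶ w) (X : C),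
        (A.act.map h).app (T.obj X) ≫ φh w X = φh v X ≫ T.map ((A.act.map h).app X)) ∧
      -- coherence with the unitor of the action
      (∀ X : C,
        φh (𝟙_ V) X ≫ T.map (A.lam.hom.app X) = A.lam.hom.app (T.obj X)) ∧
      -- coherence with the associator of the action
      (∀ (u v : V) (X : C),
        φh (u ⊗ v) X ≫ T.map ((A.assoc u v).hom.app X) =
          (A.assoc u v).hom.app (T.obj X) ≫ (A.act.obj u).map (φh v X) ≫
            φh u ((A.act.obj v).obj X)) ∧
      -- compatibility with the monad unit
      (∀ (v : V) (X : C),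
        (A.act.obj v).map (η.app X) ≫ φh v X = η.app ((A.act.obj v).obj X)) ∧
      -- compatibility with the monad multiplication
      (∀ (v : V) (X : C),
        φh v (T.obj X) ≫ T.map (φh v X) ≫ μ.app ((A.act.obj v).obj X) =
          (A.act.obj v).map (μ.app X) ≫ φh v X)) := by
  have paramHom_ext : ∀ {v : V} {X Y : C} {g₁ g₂ : (A.act.obj v).obj (T.obj X) ⟶ T.obj Y},
      IsParamHom Fs v (τ X) (τ Y) g₁ → IsParamHom Fs v (τ X) (τ Y) g₂ →
      (A.act.obj v).map (η.app X) ≫ g₁ = (A.act.obj v).map (η.app X) ≫ g₂ → g₁ = g₂ :=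
    fun {v X Y g₁ _} h₁ h₂ hu => (existsUnique_isParamHom L
      (universal X _ (hP _ _ (hτ Y) v) _)).unique ⟨h₁, rfl⟩ ⟨h₂, hu.symm⟩
  choose φ hφ using fun v X => (existsUnique_isParamHom L
    (h := η.app ((A.act.obj v).obj X)) (universal X _ (hP _ _ (hτ _) v) _)).exists
  refine ⟨⟨φ, ⟨fun v X => (hφ v X).2, fun v X => (hφ v X).1⟩, fun φh hφh => funext₂ fun v X =>
    paramHom_ext (hφh.2 v X) (hφ v X).1 (by rw [hφh.1, (hφ v X).2])⟩, ?_⟩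
  have ηnat : ∀ {X Y : C} (f : X ⟶ Y), η.app X ≫ T.map f = f ≫ η.app Y :=
    fun f => (η.naturality f).symm
  rintro φh ⟨hη, hτφ⟩
  replace hτφ : ∀ v X, IsParamHom Fs v (τ X) (τ _) (φh v X) := hτφ
  refine ⟨fun v X Y f => paramHom_ext ((hτφ v Y).map_isAlgHom_comp (hτnat f))
      ((hτφ v X).comp_isAlgHom (hτnat _)) ?_,
    fun h X => paramHom_ext ((hτφ _ X).actMap_comp h) ((hτφ _ X).comp_isAlgHom (hτnat _)) ?_,
    fun X => paramHom_ext ((hτφ _ X).comp_isAlgHom (hτnat _)) isParamHom_lam ?_,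
    fun u v X => paramHom_ext ((hτφ _ X).comp_isAlgHom (hτnat _))
      ((hτφ v X).assoc (hτφ u _)) ?_,
    hη,
    fun v X => paramHom_ext ((hτφ v _).comp_isAlgHom (IsAlgHom.comp (hτnat _) (hμ_hom _)))
      ((hτφ v X).map_isAlgHom_comp (hμ_hom X)) ?_⟩
  · rw [← Functor.map_comp_assoc, ηnat, Functor.map_comp_assoc, hη, reassoc_of% (hη v X), ηnat]
  · rw [NatTrans.naturality_assoc, hη, reassoc_of% (hη _ X), ηnat]
    rfl
  · rw [reassoc_of% (hη _ X), ηnat]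
    exact (A.lam.hom.naturality _).symm
  · rw [reassoc_of% (hη _ X), ηnat, NatTrans.naturality_assoc, Functor.comp_map,
      ← Functor.map_comp_assoc, hη, hη]
    rfl
  · rw [reassoc_of% (hη v (T.obj X)), reassoc_of% (ηnat (φh v X)), hμ_ext, Category.comp_id,
      ← Functor.map_comp_assoc, hμ_ext]
    simp

/-- **Strength on the induced monad** (Theorem 4.?(2) of the paper).
Under the hypotheses of the parametrized-induction theorem, the monad
`(T,η,μ)` induced by the adjunction becomes a strong monad: there is a unique
family `φ̂_{v,X} : v ⊳ T X ⟶ T (v ⊳ X)` such that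
`φ̂ ∘ (v ⊳ η) = η` and `φ̂ ∘ (v ⊳ τ) = τ ∘ F φ̂ ∘ φ`, and any such family is a
strength for which `(T,φ̂,η,μ)` is a strong monad. -/
theorem induced_monad_is_strong
    {V : Type u₁} [Category.{v₁} V] [MonoidalCategory V]
    {C : Type u₂} [Category.{v₂} C]
    {A : MonAction V C} (L : LeftClosed A) (Fs : StrongEndo A)
    (P : ∀ X : C, (Fs.F.obj X ⟶ X) → Prop)
    (hP : ∀ (X : C) (s : Fs.F.obj X ⟶ X), P X s →
      ∀ v : V, P ((L.lhom v).obj X) (liftAlg L Fs.F Fs.str s v))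
    -- the monad `(T,η,μ)` induced by the adjunction
    (T : C ⥤ C) (τ : ∀ X : C, Fs.F.obj (T.obj X) ⟶ T.obj X)
    (η : 𝟭 C ⟶ T) (μ : T ⋙ T ⟶ T)
    (hτ : ∀ X : C, P (T.obj X) (τ X))
    (hτnat : ∀ {X Y : C} (f : X ⟶ Y),
      Fs.F.map (T.map f) ≫ τ Y = τ X ≫ T.map f)
    (universal : ∀ (X : C) {Y : C} (t : Fs.F.obj Y ⟶ Y), P Y t →
      ∀ f : X ⟶ Y, ∃! g : T.obj X ⟶ Y,
        Fs.F.map g ≫ t = τ X ≫ g ∧ η.app X ≫ g = f)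
    -- `μ_X` is the unique homomorphic extension of the identity on `T X`
    (hμ_ext : ∀ X : C, η.app (T.obj X) ≫ μ.app X = 𝟙 (T.obj X))
    (hμ_hom : ∀ X : C, Fs.F.map (μ.app X) ≫ τ X = τ (T.obj X) ≫ μ.app X)
    -- monad laws of the induced monad
    (h_left : ∀ X : C, η.app (T.obj X) ≫ μ.app X = 𝟙 (T.obj X))
    (h_right : ∀ X : C, T.map (η.app X) ≫ μ.app X = 𝟙 (T.obj X))
    (h_assoc : ∀ X : C, T.map (μ.app X) ≫ μ.app X = μ.app (T.obj X) ≫ μ.app X) :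
    -- there is a unique family satisfying the two characterizing diagrams
    (∃! φh : ∀ (v : V) (X : C),
        (A.act.obj v).obj (T.obj X) ⟶ T.obj ((A.act.obj v).obj X),
      (∀ (v : V) (X : C),
        (A.act.obj v).map (η.app X) ≫ φh v X = η.app ((A.act.obj v).obj X)) ∧
      (∀ (v : V) (X : C),
        (A.act.obj v).map (τ X) ≫ φh v X =
          (Fs.str v).app (T.obj X) ≫ Fs.F.map (φh v X) ≫ τ ((A.act.obj v).obj X))) ∧
    -- and any such family is a strength making `(T,η,μ)` a strong monad
    (∀ φh : ∀ (v : V) (X : C),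
        (A.act.obj v).obj (T.obj X) ⟶ T.obj ((A.act.obj v).obj X),
      ((∀ (v : V) (X : C),
        (A.act.obj v).map (η.app X) ≫ φh v X = η.app ((A.act.obj v).obj X)) ∧
       (∀ (v : V) (X : C),
        (A.act.obj v).map (τ X) ≫ φh v X =
          (Fs.str v).app (T.obj X) ≫ Fs.F.map (φh v X) ≫ τ ((A.act.obj v).obj X))) →
      -- naturality in `X`
      (∀ (v : V) {X Y : C} (f : X ⟶ Y),
        (A.act.obj v).map (T.map f) ≫ φh v Y = φh v X ≫ T.map ((A.act.obj v).map f)) ∧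
      -- naturality in `v`
      (∀ {v w : V} (h : v ⟶ w) (X : C),
        (A.act.map h).app (T.obj X) ≫ φh w X = φh v X ≫ T.map ((A.act.map h).app X)) ∧
      -- coherence with the unitor of the action
      (∀ X : C,
        φh (𝟙_ V) X ≫ T.map (A.lam.hom.app X) = A.lam.hom.app (T.obj X)) ∧
      -- coherence with the associator of the action
      (∀ (u v : V) (X : C),
        φh (u ⊗ v) X ≫ T.map ((A.assoc u v).hom.app X) =
          (A.assoc u v).hom.app (T.obj X) ≫ (A.act.obj u).map (φh v X) ≫
            φh u ((A.act.obj v).obj X)) ∧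
      -- compatibility with the monad unit
      (∀ (v : V) (X : C),
        (A.act.obj v).map (η.app X) ≫ φh v X = η.app ((A.act.obj v).obj X)) ∧
      -- compatibility with the monad multiplication
      (∀ (v : V) (X : C),
        φh v (T.obj X) ≫ T.map (φh v X) ≫ μ.app ((A.act.obj v).obj X) =
          (A.act.obj v).map (μ.app X) ≫ φh v X)) :=
  induced_monad_is_strong_general L Fs P hP T τ η μ hτ hτnat universal hμ_ext hμ_hom

end MonEq
end
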